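/- arXiv:2110.07751 — 8 statements merged into one kernel-verified Lean document; each statement's English description precedes it below -/
import Mathlib

section
/- The mean squared error of the Rand-k mean estimator equals E[||x̂ − x̄||²] = (1/n²)·(d/k − 1)·R1, where R1 = Σ_{i=1}^n ||x_i||² and the expectation is over the random choice of the subsets S_1,…,S_n. -/
open Finset

noncomputable section

/-- A size-`k` subset of the coordinate set `{1,…,d}`. -/
abbrev KSub (d k : ℕ) := {S : Finset (Fin d) // S.card = k}

/-- Sample space: each of the `n` nodes independently picks a uniformly random
size-`k` subset of coordinates. -/
abbrev Omega (n d k : ℕ) := Fin n → KSub d k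

/-- Expectation with respect to the uniform distribution on `Omega n d k`
(each `n`-tuple of `k`-subsets has probability `1 / C(d,k)^n`). -/
def Exp {n d k : ℕ} (f : Omega n d k → ℝ) : ℝ :=
  (∑ ω : Omega n d k, f ω) / (Fintype.card (Omega n d k) : ℝ)

/-- The sparsified vector of node `i`: `h_{ij} = x_{ij}` if `j ∈ S_i`, else `0`. -/
def spars {n d k : ℕ} (x : Fin n → Fin d → ℝ) (ω : Omega n d k) (i : Fin n) (j : Fin d) : ℝ :=
  if j ∈ (ω i).1 then x i j else 0

/-!
For a fixed coordinate `j`, the error `x̂_j - x̄_j` is `(1/n) ∑ᵢ eᵢⱼ(Sᵢ)` with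
`eᵢⱼ(S) = ((d/k)·1[j ∈ S] - 1)·xᵢⱼ`. A uniform `k`-subset contains `j` with probability `k/d`,
so each `eᵢⱼ` has mean zero and second moment `(d/k - 1)·xᵢⱼ²`. The `Sᵢ` are independent,
so the cross terms of the square vanish and the mean square of the sum is the sum of the
second moments.
-/

open scoped BigOperators

section IndependentCoordinates

variable {ι K R : Type*} [Fintype ι] [DecidableEq ι] [Fintype K] [Field R] [CharZero R]

lemma expect_pi_eq_expect_funSplitAt (i : ι) (F : (ι → K) → R) :
    𝔼 ω, F ω = 𝔼 s, 𝔼 τ : {j // j ≠ i} → K, F ((Equiv.funSplitAt i K).symm (s, τ)) := by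
  rw [Fintype.expect_equiv (Equiv.funSplitAt i K) F (fun p => F ((Equiv.funSplitAt i K).symm p))
    (fun ω => by rw [Equiv.symm_apply_apply]), ← univ_product_univ, expect_product]

variable [Nonempty K]

lemma expect_pi_apply (i : ι) (g : K → R) : 𝔼 ω : ι → K, g (ω i) = 𝔼 s, g s := by
  rw [expect_pi_eq_expect_funSplitAt i]
  simp

lemma expect_pi_mul_apply_of_ne {i i' : ι} (hne : i ≠ i') (g h : K → R) :
    𝔼 ω : ι → K, g (ω i) * h (ω i') = (𝔼 s, g s) * 𝔼 s, h s := by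
  rw [expect_pi_eq_expect_funSplitAt i', mul_expect]
  refine expect_congr rfl fun s _ => ?_
  simp only [Equiv.funSplitAt_symm_apply, hne, dite_false, dite_true]
  rw [← expect_mul, ← expect_pi_apply (⟨i, hne⟩ : {j // j ≠ i'}) g]

lemma expect_sq_sum_pi_apply_of_expect_eq_zero (f : ι → K → R) (hf : ∀ i, 𝔼 s, f i s = 0) :
    𝔼 ω : ι → K, (∑ i, f i (ω i)) ^ 2 = ∑ i, 𝔼 s, f i s ^ 2 := by
  have hcov : ∀ i i', 𝔼 ω : ι → K, f i (ω i) * f i' (ω i') =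
      if i = i' then 𝔼 s, f i s ^ 2 else 0 := by
    intro i i'
    split_ifs with h
    · subst h; simp only [← sq, expect_pi_apply i (fun s => f i s ^ 2)]
    · rw [expect_pi_mul_apply_of_ne h, hf, zero_mul]
  simp_rw [sq (∑ i, _), sum_mul_sum, expect_sum_comm, hcov, sum_ite_eq, mem_univ, if_true]

end IndependentCoordinates

section RandK

variable {d k : ℕ}

lemma expect_mem_ksub (hk : 1 ≤ k) (hkd : k ≤ d) (j : Fin d) :
    𝔼 S : KSub d k, (if j ∈ S.1 then (1 : ℝ) else 0) = k / d := by
  obtain ⟨k, rfl⟩ := Nat.exists_eq_add_of_le' hk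
  obtain ⟨d, rfl⟩ := Nat.exists_eq_add_of_le' (hk.trans hkd)
  have hcount : ∑ S : KSub (d + 1) (k + 1), (if j ∈ S.1 then (1 : ℝ) else 0) = d.choose k := by
    rw [← sum_subtype _ (fun S => mem_powersetCard_univ) (fun S => if j ∈ S then (1 : ℝ) else 0),
      sum_boole]
    simpa [← singleton_subset_iff] using
      card_filter_powersetCard_subset {j} (univ : Finset (Fin (d + 1))) (k + 1) (by simp) (by simp)
  have hchoose : ((d + 1 : ℕ) : ℝ) * d.choose k = (d + 1).choose (k + 1) * (k + 1 : ℕ) := by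
    exact_mod_cast Nat.add_one_mul_choose_eq d k
  have hpos : ((d + 1).choose (k + 1) : ℝ) ≠ 0 := by
    exact_mod_cast (Nat.choose_pos hkd).ne'
  rw [Fintype.expect_eq_sum_div_card, hcount, Fintype.card_finset_len, Fintype.card_fin]
  field_simp
  linear_combination hchoose

lemma nonempty_ksub (hkd : k ≤ d) : Nonempty (KSub d k) :=
  have ⟨S, hS⟩ := powersetCard_nonempty.2 (by simpa using hkd)
  ⟨⟨S, mem_powersetCard_univ.1 hS⟩⟩

def randkError (j : Fin d) (S : KSub d k) : ℝ := (d / k : ℝ) * (if j ∈ S.1 then 1 else 0) - 1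

lemma expect_randkError (hk : 1 ≤ k) (hkd : k ≤ d) (j : Fin d) :
    𝔼 S : KSub d k, randkError j S = 0 := by
  have := nonempty_ksub hkd
  have hk0 : (k : ℝ) ≠ 0 := by norm_cast; omega
  have hd0 : (d : ℝ) ≠ 0 := by norm_cast; omega
  simp only [randkError]
  rw [expect_sub_distrib, ← mul_expect, expect_mem_ksub hk hkd, Fintype.expect_one]
  field_simp
  ring

lemma expect_randkError_sq (hk : 1 ≤ k) (hkd : k ≤ d) (j : Fin d) :
    𝔼 S : KSub d k, randkError j S ^ 2 = d / k - 1 := by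
  have := nonempty_ksub hkd
  have hk0 : (k : ℝ) ≠ 0 := by norm_cast; omega
  have hd0 : (d : ℝ) ≠ 0 := by norm_cast; omega
  have hexpand : ∀ S : KSub d k, randkError j S ^ 2
      = ((d / k) ^ 2 - 2 * (d / k)) * (if j ∈ S.1 then 1 else 0) + 1 := by
    intro S; rw [randkError]; split_ifs <;> ring
  simp_rw [hexpand]
  rw [expect_add_distrib, ← mul_expect, expect_mem_ksub hk hkd, Fintype.expect_one]
  field_simp
  ring

end RandK

theorem randk_mse_general (n d k : ℕ) (hk : 1 ≤ k) (hkd : k ≤ d)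
    (x : Fin n → Fin d → ℝ) :
    Exp (fun ω : Omega n d k =>
        ∑ j : Fin d,
          ((1 / (n : ℝ)) * ((d : ℝ) / (k : ℝ)) * ∑ i : Fin n, spars x ω i j
            - (1 / (n : ℝ)) * ∑ i : Fin n, x i j) ^ 2)
      = (1 / (n : ℝ) ^ 2) * ((d : ℝ) / (k : ℝ) - 1)
          * ∑ i : Fin n, ∑ j : Fin d, x i j ^ 2 := by
  have := nonempty_ksub hkd
  set e : Fin n → Fin d → KSub d k → ℝ := fun i j S => randkError j S * x i j
  have herr : ∀ ω j, (1 / (n : ℝ)) * ((d : ℝ) / (k : ℝ)) * ∑ i, spars x ω i j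
      - (1 / (n : ℝ)) * ∑ i, x i j = 1 / n * ∑ i, e i j (ω i) := by
    intro ω j
    simp only [e, randkError, spars, mul_assoc, ← mul_sub, mul_sum, ← sum_sub_distrib]
    congr 1; ext i; split_ifs <;> ring
  have he_mean : ∀ i j, 𝔼 S, e i j S = 0 := fun i j => by
    rw [← expect_mul, expect_randkError hk hkd, zero_mul]
  have he_sq : ∀ i j, 𝔼 S, e i j S ^ 2 = (d / k - 1) * x i j ^ 2 := fun i j => by
    simp only [e, mul_pow]
    rw [← expect_mul, expect_randkError_sq hk hkd]
  calc _ = 𝔼 ω : Omega n d k, ∑ j, (1 / (n : ℝ)) ^ 2 * (∑ i, e i j (ω i)) ^ 2 := by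
        rw [Exp, ← Fintype.expect_eq_sum_div_card]
        simp_rw [herr, mul_pow]
    _ = ∑ j, (1 / (n : ℝ)) ^ 2 * ∑ i, 𝔼 S, e i j S ^ 2 := by
        rw [expect_sum_comm]
        refine sum_congr rfl fun j _ => ?_
        rw [← mul_expect, expect_sq_sum_pi_apply_of_expect_eq_zero _ fun i => he_mean i j]
    _ = _ := by
        simp only [he_sq, ← mul_sum]
        rw [sum_comm]
        ring

/-- Rand-k estimation error:
`E[‖x̂ − x̄‖²] = (1/n²) (d/k − 1) R₁`, where `x̂ = (1/n)(d/k) Σᵢ hᵢ`,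
`x̄ = (1/n) Σᵢ xᵢ` and `R₁ = Σᵢ ‖xᵢ‖²`. -/
theorem randk_mse (n d k : ℕ) (hn : 1 ≤ n) (hk : 1 ≤ k) (hkd : k ≤ d)
    (x : Fin n → Fin d → ℝ) :
    Exp (fun ω : Omega n d k =>
        ∑ j : Fin d,
          ((1 / (n : ℝ)) * ((d : ℝ) / (k : ℝ)) * ∑ i : Fin n, spars x ω i j
            - (1 / (n : ℝ)) * ∑ i : Fin n, x i j) ^ 2)
      = (1 / (n : ℝ) ^ 2) * ((d : ℝ) / (k : ℝ) - 1)
          * ∑ i : Fin n, ∑ j : Fin d, x i j ^ 2 :=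
  randk_mse_general n d k hk hkd x
end
end

section
/- The Rand-k-Spatial estimator is unbiased: for every coordinate j, E[x̂_j] = (1/n)·Σ_{i=1}^n x_{ij}, where the expectation is over the random choice of the subsets S_1,…,S_n. -/
open Finset

noncomputable section

/-- The per-coordinate sampling probability `p = k/d`. -/
def pr (d k : ℕ) : ℝ := (k : ℝ) / (d : ℝ)

/-- `M_j`: the number of nodes that send coordinate `j`. -/
def Mcount {n d k : ℕ} (ω : Omega n d k) (j : Fin d) : ℕ :=
  (Finset.univ.filter fun i : Fin n => j ∈ (ω i).1).card

/-- The normalizing constant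
`β̄ = ( Σ_{m=1}^n (p/T(m))·C(n−1,m−1)·p^{m−1}·(1−p)^{n−m} )⁻¹`. -/
def betaBar (n d k : ℕ) (T : ℕ → ℝ) : ℝ :=
  (∑ m ∈ Finset.Icc 1 n,
      (pr d k / T m) * ((n - 1).choose (m - 1) : ℝ) * pr d k ^ (m - 1)
        * (1 - pr d k) ^ (n - m))⁻¹

/-- The Rand-k-Spatial estimate of coordinate `j` of the mean:
`x̂_j = (1/n)·(β̄/T(M_j))·Σᵢ h_{ij}` when `M_j ≥ 1`, and `x̂_j = 0` when `M_j = 0`. -/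
def spatialEst {n d k : ℕ} (x : Fin n → Fin d → ℝ) (T : ℕ → ℝ) (ω : Omega n d k)
    (j : Fin d) : ℝ :=
  if 1 ≤ Mcount ω j then
    (1 / (n : ℝ)) * (betaBar n d k T / T (Mcount ω j)) * ∑ i : Fin n, spars x ω i j
  else 0

/-- The mean squared error `E[‖x̂ᵀ − x̄‖²]` of the Rand-k-Spatial estimator with
scaling function `T`. -/
def mseSpatial (n d k : ℕ) (x : Fin n → Fin d → ℝ) (T : ℕ → ℝ) : ℝ :=
  Exp (fun ω : Omega n d k =>
    ∑ j : Fin d, (spatialEst x T ω j - (1 / (n : ℝ)) * ∑ i : Fin n, x i j) ^ 2)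

lemma card_filter_mem_powersetCard {α : Type*} [DecidableEq α] (s : Finset α) (a : α)
    (ha : a ∈ s) (m : ℕ) (hm : 1 ≤ m) :
    ((s.powersetCard m).filter (fun t => a ∈ t)).card
      = (s.card - 1).choose (m - 1) := by
  rw [← Finset.card_erase_of_mem ha, ← Finset.card_powersetCard]
  apply Finset.card_bij (fun t _ => t.erase a)
  · intro t ht
    simp only [Finset.mem_filter, Finset.mem_powersetCard] at ht
    rw [Finset.mem_powersetCard]
    exact ⟨Finset.erase_subset_erase a ht.1.1,
      by rw [Finset.card_erase_of_mem ht.2, ht.1.2]⟩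
  · intro t1 h1 t2 h2 h
    simp only [Finset.mem_filter] at h1 h2
    rw [← Finset.insert_erase h1.2, ← Finset.insert_erase h2.2, h]
  · intro u hu
    rw [Finset.mem_powersetCard] at hu
    have ha' : a ∉ u := fun h => (Finset.mem_erase.mp (hu.1 h)).1 rfl
    refine ⟨insert a u, ?_, ?_⟩
    · simp only [Finset.mem_filter, Finset.mem_powersetCard]
      refine ⟨⟨?_, ?_⟩, Finset.mem_insert_self a u⟩
      · exact Finset.insert_subset ha (hu.1.trans (Finset.erase_subset a s))
      · rw [Finset.card_insert_of_notMem ha', hu.2]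
        omega
    · rw [Finset.erase_insert ha']

lemma card_KSub (d k : ℕ) : Fintype.card (KSub d k) = d.choose k := by
  classical
  rw [Fintype.card_subtype]
  have h : (univ.filter fun S : Finset (Fin d) => S.card = k)
      = (univ : Finset (Fin d)).powersetCard k := by
    ext S
    simp [Finset.mem_powersetCard]
  rw [h, Finset.card_powersetCard, Finset.card_univ, Fintype.card_fin]

lemma card_KSub_mem (d k : ℕ) (hk : 1 ≤ k) (j : Fin d) :
    Fintype.card {S : KSub d k // j ∈ S.1} = (d - 1).choose (k - 1) := by
  classical
  have e : {S : KSub d k // j ∈ S.1} ≃ {S : Finset (Fin d) // S.card = k ∧ j ∈ S} :=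
    { toFun := fun S => ⟨S.1.1, S.1.2, S.2⟩
      invFun := fun S => ⟨⟨S.1, S.2.1⟩, S.2.2⟩
      left_inv := fun _ => rfl
      right_inv := fun _ => rfl }
  rw [Fintype.card_congr e, Fintype.card_subtype]
  have h : (univ.filter fun S : Finset (Fin d) => S.card = k ∧ j ∈ S)
      = ((univ : Finset (Fin d)).powersetCard k).filter (fun t => j ∈ t) := by
    ext S
    simp [Finset.mem_powersetCard, and_comm]
  rw [h, card_filter_mem_powersetCard _ j (Finset.mem_univ j) k hk,
    Finset.card_univ, Fintype.card_fin]

lemma fiber_count (n d k : ℕ) (j : Fin d) (U : Finset (Fin n)) :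
    ((univ : Finset (Omega n d k)).filter
      (fun ω => (univ.filter fun i => j ∈ (ω i).1) = U)).card
    = (Fintype.card {S : KSub d k // j ∈ S.1}) ^ U.card
      * (Fintype.card {S : KSub d k // j ∉ S.1}) ^ (n - U.card) := by
  classical
  rw [← Fintype.card_subtype]
  have e1 : {ω : Omega n d k // (univ.filter fun i => j ∈ (ω i).1) = U}
      ≃ {ω : Omega n d k // ∀ i, j ∈ (ω i).1 ↔ i ∈ U} :=
    Equiv.subtypeEquivRight (by
      intro ω
      simp [Finset.ext_iff])
  have e2 : {ω : Omega n d k // ∀ i, j ∈ (ω i).1 ↔ i ∈ U}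
      ≃ ∀ i : Fin n, {S : KSub d k // j ∈ S.1 ↔ i ∈ U} :=
    Equiv.subtypePiEquivPi (p := fun (i : Fin n) (S : KSub d k) => j ∈ S.1 ↔ i ∈ U)
  rw [Fintype.card_congr (e1.trans e2), Fintype.card_pi]
  have h : ∀ i : Fin n, Fintype.card {S : KSub d k // j ∈ S.1 ↔ i ∈ U}
      = if i ∈ U then Fintype.card {S : KSub d k // j ∈ S.1}
        else Fintype.card {S : KSub d k // j ∉ S.1} := by
    intro i
    by_cases hi : i ∈ U
    · simp only [hi, if_true]
      exact Fintype.card_congr (Equiv.subtypeEquivRight (by simp [hi]))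
    · simp only [hi, if_false]
      exact Fintype.card_congr (Equiv.subtypeEquivRight (by simp [hi]))
  rw [Finset.prod_congr rfl (fun i _ => h i), Finset.prod_ite _ _,
    Finset.prod_const, Finset.prod_const]
  have h1 : (univ.filter fun i : Fin n => i ∈ U) = U := by ext i; simp
  have h2 : (univ.filter fun i : Fin n => ¬ i ∈ U) = Uᶜ := by
    ext i; simp
  rw [h1, h2, Finset.card_compl, Fintype.card_fin]

/-- Rand-k-Spatial unbiasedness: for every coordinate `j`,
`E[x̂_j] = (1/n) Σᵢ x_{ij}`. -/
theorem spatial_unbiased (n d k : ℕ) (hn : 1 ≤ n) (hk : 1 ≤ k) (hkd : k ≤ d)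
    (x : Fin n → Fin d → ℝ) (T : ℕ → ℝ) (hT : ∀ m ∈ Finset.Icc 1 n, 0 < T m)
    (j : Fin d) :
    Exp (fun ω : Omega n d k => spatialEst x T ω j)
      = (1 / (n : ℝ)) * ∑ i : Fin n, x i j := by
  classical
  have hd : 1 ≤ d := hk.trans hkd
  set A : ℕ := Fintype.card {S : KSub d k // j ∈ S.1} with hAdef
  set B : ℕ := Fintype.card {S : KSub d k // j ∉ S.1} with hBdef
  set N : ℕ := Fintype.card (KSub d k) with hNdef
  have hNval : N = d.choose k := card_KSub d k
  have hAval : A = (d - 1).choose (k - 1) := card_KSub_mem d k hk j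
  have hALe : A ≤ N := Fintype.card_subtype_le _
  have hBval : B = N - A := Fintype.card_subtype_compl _
  have hNpos : 0 < N := by rw [hNval]; exact Nat.choose_pos hkd
  have hdA : d * A = k * N := by
    obtain ⟨d', rfl⟩ : ∃ d', d = d' + 1 := ⟨d - 1, by omega⟩
    obtain ⟨k', rfl⟩ : ∃ k', k = k' + 1 := ⟨k - 1, by omega⟩
    rw [hAval, hNval]
    simpa [Nat.succ_eq_add_one, mul_comm] using Nat.add_one_mul_choose_eq d' k'
  have hN0 : (N : ℝ) ≠ 0 := Nat.cast_ne_zero.mpr hNpos.ne'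
  have hd0 : (d : ℝ) ≠ 0 := Nat.cast_ne_zero.mpr (by omega)
  have hn0 : (n : ℝ) ≠ 0 := Nat.cast_ne_zero.mpr (by omega)
  have hp : (A : ℝ) / N = pr d k := by
    rw [pr, div_eq_div_iff hN0 hd0]
    have h : A * d = k * N := by rw [mul_comm]; exact hdA
    exact_mod_cast h
  have hq : (B : ℝ) / N = 1 - pr d k := by
    have hBR : (B : ℝ) = (N : ℝ) - A := by
      rw [hBval]
      exact Nat.cast_sub hALe
    rw [hBR, ← hp]
    field_simp
  have hp_pos : 0 < pr d k := by
    rw [pr]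
    apply div_pos
    · exact_mod_cast hk
    · exact_mod_cast hd
  have hp_le : pr d k ≤ 1 := by
    rw [pr, div_le_one (by exact_mod_cast hd : (0:ℝ) < d)]
    exact_mod_cast hkd
  have h1p : (0:ℝ) ≤ 1 - pr d k := by linarith
  set S : ℝ := ∑ m ∈ Finset.Icc 1 n,
      (pr d k / T m) * ((n - 1).choose (m - 1) : ℝ) * pr d k ^ (m - 1)
        * (1 - pr d k) ^ (n - m) with hSdef
  set β : ℝ := betaBar n d k T with hβdef
  have hSpos : 0 < S := by
    rw [hSdef]
    apply Finset.sum_pos'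
    · intro m hm
      have hTm := hT m hm
      have h0 : (0:ℝ) < pr d k / T m := div_pos hp_pos hTm
      exact mul_nonneg (mul_nonneg (mul_nonneg h0.le
        (Nat.cast_nonneg _)) (pow_nonneg hp_pos.le _)) (pow_nonneg h1p _)
    · refine ⟨n, Finset.mem_Icc.mpr ⟨hn, le_refl n⟩, ?_⟩
      have hTn := hT n (Finset.mem_Icc.mpr ⟨hn, le_refl n⟩)
      have h0 : (0:ℝ) < pr d k / T n := div_pos hp_pos hTn
      have h1 : (0:ℝ) < pr d k ^ (n-1) := pow_pos hp_pos _
      simp only [Nat.choose_self, Nat.cast_one, Nat.sub_self, pow_zero, mul_one]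
      exact mul_pos h0 h1
  have hbS : β * S = 1 := by
    rw [hβdef]
    simp only [betaBar]
    rw [← hSdef]
    exact inv_mul_cancel₀ hSpos.ne'
  -- Step A: partition the sum over ω by the fiber of incidence sets
  have stepA : (∑ ω : Omega n d k, spatialEst x T ω j)
      = ∑ U : Finset (Fin n), ((A ^ U.card * B ^ (n - U.card) : ℕ) : ℝ)
          * ((1 / (n:ℝ)) * (β / T U.card) * ∑ i ∈ U, x i j) := by
    rw [← Finset.sum_fiberwise univ
      (fun ω : Omega n d k => univ.filter fun i => j ∈ (ω i).1)
      (fun ω => spatialEst x T ω j)]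
    apply Finset.sum_congr rfl
    intro U _
    have hval : ∀ ω ∈ (univ : Finset (Omega n d k)).filter
        (fun ω => (univ.filter fun i => j ∈ (ω i).1) = U),
        spatialEst x T ω j
          = (1 / (n:ℝ)) * (β / T U.card) * ∑ i ∈ U, x i j := by
      intro ω hω
      rw [Finset.mem_filter] at hω
      have hU := hω.2
      have hM : Mcount ω j = U.card := by rw [Mcount, hU]
      have hsum : (∑ i : Fin n, spars x ω i j) = ∑ i ∈ U, x i j := by
        rw [← hU, Finset.sum_filter]
        simp [spars]
      rw [spatialEst, hM, hsum]
      by_cases hc : 1 ≤ U.card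
      · rw [if_pos hc, ← hβdef]
      · rw [if_neg hc]
        have hU0 : U = ∅ := by
          rw [← Finset.card_eq_zero]; omega
        simp [hU0]
    rw [Finset.sum_congr rfl hval, Finset.sum_const,
      fiber_count n d k j U, ← hAdef, ← hBdef, nsmul_eq_mul]
  -- Step B: swap the order of summation
  have stepB : (∑ U : Finset (Fin n), ((A ^ U.card * B ^ (n - U.card) : ℕ) : ℝ)
          * ((1 / (n:ℝ)) * (β / T U.card) * ∑ i ∈ U, x i j))
      = ∑ i : Fin n, ∑ U ∈ (univ : Finset (Finset (Fin n))).filter (fun U => i ∈ U),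
          ((A ^ U.card * B ^ (n - U.card) : ℕ) : ℝ)
            * ((1 / (n:ℝ)) * (β / T U.card)) * x i j := by
    have key : ∀ U : Finset (Fin n), ((A ^ U.card * B ^ (n - U.card) : ℕ) : ℝ)
          * ((1 / (n:ℝ)) * (β / T U.card) * ∑ i ∈ U, x i j)
        = ∑ i : Fin n, if i ∈ U then ((A ^ U.card * B ^ (n - U.card) : ℕ) : ℝ)
            * ((1 / (n:ℝ)) * (β / T U.card)) * x i j else 0 := by
      intro U
      rw [← Finset.sum_filter]
      have hfU : (univ.filter fun i : Fin n => i ∈ U) = U := by ext i; simp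
      rw [hfU, Finset.mul_sum, Finset.mul_sum]
      exact Finset.sum_congr rfl fun i _ => by ring
    rw [Finset.sum_congr rfl (fun U _ => key U), Finset.sum_comm]
    exact Finset.sum_congr rfl fun i _ => (Finset.sum_filter _ _).symm
  -- Step C: per node, partition subsets containing i by cardinality
  have stepC : ∀ i : Fin n,
      (∑ U ∈ (univ : Finset (Finset (Fin n))).filter (fun U => i ∈ U),
        ((A ^ U.card * B ^ (n - U.card) : ℕ) : ℝ) * ((1 / (n:ℝ)) * (β / T U.card)))
      = ∑ m ∈ Finset.Icc 1 n, ((n-1).choose (m-1) : ℝ)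
          * (((A ^ m * B ^ (n - m) : ℕ) : ℝ) * ((1 / (n:ℝ)) * (β / T m))) := by
    intro i
    rw [← Finset.sum_fiberwise_of_maps_to (g := Finset.card) (t := Finset.Icc 1 n)
      (fun U hU => by
        rw [Finset.mem_filter] at hU
        rw [Finset.mem_Icc]
        exact ⟨Finset.card_pos.mpr ⟨i, hU.2⟩, by simpa using Finset.card_le_univ U⟩)]
    apply Finset.sum_congr rfl
    intro m hm
    rw [Finset.mem_Icc] at hm
    have hcard : (((univ : Finset (Finset (Fin n))).filter (fun U => i ∈ U)).filter
        (fun U => U.card = m)).card = (n-1).choose (m-1) := by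
      have h1 : (((univ : Finset (Finset (Fin n))).filter (fun U => i ∈ U)).filter
          (fun U => U.card = m))
          = ((univ : Finset (Fin n)).powersetCard m).filter (fun U => i ∈ U) := by
        ext U
        simp [Finset.mem_powersetCard, and_comm]
      rw [h1, card_filter_mem_powersetCard _ i (Finset.mem_univ i) m hm.1,
        Finset.card_univ, Fintype.card_fin]
    have hconst : ∀ U ∈ (((univ : Finset (Finset (Fin n))).filter (fun U => i ∈ U)).filter
        (fun U => U.card = m)),
        ((A ^ U.card * B ^ (n - U.card) : ℕ) : ℝ) * ((1 / (n:ℝ)) * (β / T U.card))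
        = ((A ^ m * B ^ (n - m) : ℕ) : ℝ) * ((1 / (n:ℝ)) * (β / T m)) := by
      intro U hU
      rw [Finset.mem_filter] at hU
      rw [hU.2]
    rw [Finset.sum_congr rfl hconst, Finset.sum_const, hcard, nsmul_eq_mul]
  -- per-term identity
  have hterm : ∀ m ∈ Finset.Icc 1 n, ((A ^ m * B ^ (n - m) : ℕ) : ℝ)
      = (pr d k * pr d k ^ (m-1) * (1 - pr d k) ^ (n-m)) * (N:ℝ)^n := by
    intro m hm
    rw [Finset.mem_Icc] at hm
    have h1 : pr d k * pr d k ^ (m-1) = pr d k ^ m := by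
      rw [← pow_succ']
      congr 1
      omega
    have h2 : (N:ℝ)^n = (N:ℝ)^m * (N:ℝ)^(n-m) := by
      rw [← pow_add]
      congr 1
      omega
    rw [h1, ← hq, ← hp, h2, div_pow, div_pow]
    push_cast
    field_simp
  have hΩ : (Fintype.card (Omega n d k) : ℝ) = (N:ℝ)^n := by
    rw [show Fintype.card (Omega n d k) = N ^ n by
      rw [Fintype.card_fun, Fintype.card_fin]]
    push_cast
    rfl
  -- assemble
  have hW : (∑ m ∈ Finset.Icc 1 n, ((n-1).choose (m-1) : ℝ)
      * (((A ^ m * B ^ (n - m) : ℕ) : ℝ) * ((1 / (n:ℝ)) * (β / T m))))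
      = (N:ℝ)^n * ((1/(n:ℝ)) * (β * S)) := by
    have hsum : ∀ m ∈ Finset.Icc 1 n, ((n-1).choose (m-1) : ℝ)
        * (((A ^ m * B ^ (n - m) : ℕ) : ℝ) * ((1 / (n:ℝ)) * (β / T m)))
        = (N:ℝ)^n * ((1/(n:ℝ)) * (β * ((pr d k / T m) * ((n-1).choose (m-1):ℝ)
            * pr d k ^ (m-1) * (1 - pr d k)^(n-m)))) := by
      intro m hm
      rw [hterm m hm]
      ring
    rw [Finset.sum_congr rfl hsum, ← Finset.mul_sum, ← Finset.mul_sum, ← Finset.mul_sum,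
      ← hSdef]
  have stepD : (∑ ω : Omega n d k, spatialEst x T ω j)
      = (∑ m ∈ Finset.Icc 1 n, ((n-1).choose (m-1) : ℝ)
          * (((A ^ m * B ^ (n - m) : ℕ) : ℝ) * ((1 / (n:ℝ)) * (β / T m))))
        * ∑ i : Fin n, x i j := by
    rw [stepA, stepB, Finset.mul_sum]
    apply Finset.sum_congr rfl
    intro i _
    rw [← stepC i, Finset.sum_mul]
  simp only [Exp]
  rw [stepD, hW, hbS, hΩ]
  field_simp
end
end

section
/- The mean squared error of the Rand-k-Spatial estimator equals E[||x̂ − x̄||²] = (1/n²)·(d/k − 1)·R1 + (1/n²)·(c1·R1 − c2·R2), where the expectation is over the random choice of the subsets S_1,…,S_n. -/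
open Finset

noncomputable section

section Aux

lemma card_filter_subset_powersetCard {α : Type*} [DecidableEq α] (u I : Finset α)
    (hI : I ⊆ u) (m : ℕ) (hm : I.card ≤ m) :
    ((u.powersetCard m).filter fun s => I ⊆ s).card = (u.card - I.card).choose (m - I.card) := by
  rw [← Finset.card_sdiff_of_subset hI, ← Finset.card_powersetCard (m - I.card) (u \ I)]
  apply Finset.card_bij' (fun s _ => s \ I) (fun t _ => t ∪ I)
  · intro s hs
    simp only [mem_filter, mem_powersetCard] at hs
    obtain ⟨⟨hsu, hcard⟩, hIs⟩ := hs
    rw [mem_powersetCard]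
    exact ⟨sdiff_subset_sdiff hsu le_rfl, by rw [card_sdiff_of_subset hIs, hcard]⟩
  · intro t ht
    rw [mem_powersetCard] at ht
    obtain ⟨htu, hcard⟩ := ht
    have hdisj : Disjoint t I := disjoint_of_subset_left htu sdiff_disjoint
    simp only [mem_filter, mem_powersetCard]
    refine ⟨⟨union_subset (htu.trans sdiff_subset) hI, ?_⟩, subset_union_right⟩
    rw [card_union_of_disjoint hdisj, hcard]
    omega
  · intro s hs
    simp only [mem_filter, mem_powersetCard] at hs
    exact sdiff_union_of_subset hs.2
  · intro t ht
    rw [mem_powersetCard] at ht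
    have hdisj : Disjoint t I := disjoint_of_subset_left ht.1 sdiff_disjoint
    rw [union_sdiff_right, sdiff_eq_self_of_disjoint hdisj]

lemma sum_ksub {d k : ℕ} (f : Finset (Fin d) → ℝ) :
    ∑ S : KSub d k, f S.1 = ∑ s ∈ (univ : Finset (Fin d)).powersetCard k, f s := by
  rw [Finset.sum_subtype (p := fun s => s.card = k) ((univ : Finset (Fin d)).powersetCard k)
    (by intro s; simp [Finset.mem_powersetCard]) f]

lemma sum_ksub_ite {d k : ℕ} (hk : 1 ≤ k) (hkd : k ≤ d) (j : Fin d) (xv yv : ℝ) :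
    ∑ S : KSub d k, (if j ∈ S.1 then xv else yv)
      = ((d-1).choose (k-1) : ℝ) * xv + ((d-1).choose k : ℝ) * yv := by
  rw [sum_ksub (fun s => if j ∈ s then xv else yv), Finset.sum_ite]
  have h1 : ((univ : Finset (Fin d)).powersetCard k).filter (fun s => j ∈ s)
      = ((univ : Finset (Fin d)).powersetCard k).filter (fun s => {j} ⊆ s) := by
    simp [Finset.singleton_subset_iff]
  have hc1 : (((univ : Finset (Fin d)).powersetCard k).filter (fun s => j ∈ s)).card
      = (d-1).choose (k-1) := by
    rw [h1, card_filter_subset_powersetCard _ _ (by simp) k (by simpa using hk)]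
    simp [Finset.card_univ]
  have htot : ((univ : Finset (Fin d)).powersetCard k).card = d.choose k := by
    simp [Finset.card_powersetCard, Finset.card_univ]
  have hc2 : (((univ : Finset (Fin d)).powersetCard k).filter (fun s => ¬ j ∈ s)).card
      = (d-1).choose k := by
    have hsp := Finset.card_filter_add_card_filter_not
      (s := (univ : Finset (Fin d)).powersetCard k) (p := fun s => j ∈ s)
    have hpascal : d.choose k = (d-1).choose (k-1) + (d-1).choose k := by
      obtain ⟨d', rfl⟩ : ∃ d', d = d'+1 := ⟨d-1, by omega⟩
      obtain ⟨k', rfl⟩ : ∃ k', k = k'+1 := ⟨k-1, by omega⟩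
      simp [Nat.choose_succ_succ]
    omega
  rw [Finset.sum_const, Finset.sum_const, hc1, hc2]
  simp [nsmul_eq_mul]

lemma sum_omega_eq {n d k : ℕ} (hk : 1 ≤ k) (hkd : k ≤ d) (j : Fin d)
    (G : Finset (Fin n) → ℝ) :
    ∑ ω : Omega n d k, G (univ.filter fun i => j ∈ (ω i).1)
      = ∑ s : Finset (Fin n),
          ((d-1).choose (k-1) : ℝ)^s.card * ((d-1).choose k : ℝ)^(n - s.card) * G s := by
  classical
  set a : ℝ := ((d-1).choose (k-1) : ℝ)
  set b : ℝ := ((d-1).choose k : ℝ)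
  have step1 : ∀ ω : Omega n d k,
      G (univ.filter fun i => j ∈ (ω i).1)
        = ∑ s : Finset (Fin n),
            (if (univ.filter fun i => j ∈ (ω i).1) = s then (1:ℝ) else 0) * G s := by
    intro ω
    simp only [ite_mul, one_mul, zero_mul, Finset.sum_ite_eq, Finset.mem_univ, if_true]
  simp_rw [step1]
  rw [Finset.sum_comm]
  refine Finset.sum_congr rfl fun s _ => ?_
  rw [← Finset.sum_mul]
  congr 1
  have heq : ∀ ω : Omega n d k,
      ((univ.filter fun i => j ∈ (ω i).1) = s) ↔ ∀ i, (j ∈ (ω i).1 ↔ i ∈ s) := by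
    intro ω
    rw [Finset.ext_iff]
    constructor
    · intro h i; have := h i; simp only [Finset.mem_filter, Finset.mem_univ, true_and] at this
      exact this
    · intro h i; simp only [Finset.mem_filter, Finset.mem_univ, true_and]; exact h i
  have hprod : ∀ ω : Omega n d k,
      (if (univ.filter fun i => j ∈ (ω i).1) = s then (1:ℝ) else 0)
        = ∏ i : Fin n, (if (j ∈ (ω i).1 ↔ i ∈ s) then (1:ℝ) else 0) := by
    intro ω
    by_cases h : ∀ i, (j ∈ (ω i).1 ↔ i ∈ s)
    · rw [if_pos ((heq ω).2 h)]
      exact (Finset.prod_eq_one fun i _ => if_pos (h i)).symm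
    · rw [if_neg (fun hc => h ((heq ω).1 hc))]
      obtain ⟨i, hi⟩ := not_forall.1 h
      exact (Finset.prod_eq_zero (Finset.mem_univ i) (if_neg (α := ℝ) hi)).symm
  simp_rw [hprod]
  have := (Finset.prod_univ_sum (fun _ : Fin n => (univ : Finset (KSub d k)))
    (fun i S => if (j ∈ S.1 ↔ i ∈ s) then (1:ℝ) else 0)).symm
  rw [Fintype.piFinset_univ] at this
  rw [this]
  have hfac : ∀ i : Fin n,
      (∑ S : KSub d k, if (j ∈ S.1 ↔ i ∈ s) then (1:ℝ) else 0)
        = if i ∈ s then a else b := by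
    intro i
    by_cases hi : i ∈ s
    · rw [if_pos hi]
      have : ∀ S : KSub d k, (if (j ∈ S.1 ↔ i ∈ s) then (1:ℝ) else 0)
          = if j ∈ S.1 then (1:ℝ) else 0 := by
        intro S; simp [hi]
      rw [Finset.sum_congr rfl fun S _ => this S, sum_ksub_ite hk hkd j 1 0]
      simp [a]
    · rw [if_neg hi]
      have : ∀ S : KSub d k, (if (j ∈ S.1 ↔ i ∈ s) then (1:ℝ) else 0)
          = if j ∈ S.1 then (0:ℝ) else 1 := by
        intro S; simp [hi]
      rw [Finset.sum_congr rfl fun S _ => this S, sum_ksub_ite hk hkd j 0 1]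
      simp [b]
  rw [Finset.prod_congr rfl fun i _ => hfac i]
  rw [← Finset.prod_filter_mul_prod_filter_not univ (· ∈ s)]
  have h1 : univ.filter (· ∈ s) = s := by ext i; simp
  have h2 : univ.filter (¬ · ∈ s) = sᶜ := by ext i; simp
  rw [Finset.prod_congr h1 (fun i hi => if_pos hi),
      Finset.prod_congr h2 (fun i hi => if_neg (by simpa using hi))]
  simp [Finset.prod_const, Finset.card_compl]

lemma master {n d k : ℕ} (hk : 1 ≤ k) (hkd : k ≤ d) (j : Fin d)
    (F : ℕ → ℝ) (I : Finset (Fin n)) :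
    ∑ ω : Omega n d k,
        (F (Mcount ω j) * ∏ i ∈ I, (if j ∈ (ω i).1 then (1:ℝ) else 0))
      = ∑ m ∈ Finset.Icc I.card n,
          ((n - I.card).choose (m - I.card) : ℝ) * ((d-1).choose (k-1) : ℝ)^m
            * ((d-1).choose k : ℝ)^(n-m) * F m := by
  classical
  set a : ℝ := ((d-1).choose (k-1) : ℝ) with ha
  set b : ℝ := ((d-1).choose k : ℝ) with hb
  have hsummand : ∀ ω : Omega n d k,
      F (Mcount ω j) * ∏ i ∈ I, (if j ∈ (ω i).1 then (1:ℝ) else 0)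
        = (fun s : Finset (Fin n) => F s.card * (if I ⊆ s then (1:ℝ) else 0))
            (univ.filter fun i => j ∈ (ω i).1) := by
    intro ω
    simp only
    congr 1
    by_cases h : I ⊆ univ.filter fun i => j ∈ (ω i).1
    · rw [if_pos h]
      refine Finset.prod_eq_one fun i hi => if_pos ?_
      have := h hi; simp only [Finset.mem_filter] at this; exact this.2
    · rw [if_neg h]
      obtain ⟨i, hiI, hi⟩ := Finset.not_subset.1 h
      refine Finset.prod_eq_zero hiI (if_neg ?_)
      intro hc; exact hi (Finset.mem_filter.2 ⟨Finset.mem_univ i, hc⟩)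
  rw [Finset.sum_congr rfl fun ω _ => hsummand ω]
  rw [sum_omega_eq hk hkd j (fun s => F s.card * (if I ⊆ s then (1:ℝ) else 0))]
  have huniv : (univ : Finset (Finset (Fin n))) = (univ : Finset (Fin n)).powerset := by
    rw [Finset.powerset_univ]
  rw [huniv, Finset.sum_powerset]
  have hcardu : (univ : Finset (Fin n)).card = n := by simp
  rw [hcardu]
  have hinner : ∀ m ∈ Finset.range (n+1),
      (∑ s ∈ Finset.powersetCard m (univ : Finset (Fin n)),
        a^s.card * b^(n - s.card) * (F s.card * (if I ⊆ s then (1:ℝ) else 0)))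
      = (a^m * b^(n-m) * F m) *
          (((Finset.powersetCard m (univ : Finset (Fin n))).filter fun s => I ⊆ s).card : ℝ) := by
    intro m _
    have hsteq : ∀ s ∈ Finset.powersetCard m (univ : Finset (Fin n)),
        a^s.card * b^(n - s.card) * (F s.card * (if I ⊆ s then (1:ℝ) else 0))
          = if I ⊆ s then a^m * b^(n-m) * F m else 0 := by
      intro s hs
      have hc : s.card = m := (Finset.mem_powersetCard.1 hs).2
      rw [hc]
      by_cases h : I ⊆ s <;> simp [h]
    rw [Finset.sum_congr rfl hsteq, ← Finset.sum_filter, Finset.sum_const, nsmul_eq_mul]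
    ring
  rw [Finset.sum_congr rfl hinner]
  rw [show Finset.range (n+1) = Finset.Icc 0 n by ext m; simp [Nat.lt_succ_iff]]
  rw [← Finset.sum_subset (Finset.Icc_subset_Icc_left (Nat.zero_le I.card))]
  · refine Finset.sum_congr rfl fun m hm => ?_
    have hmI : I.card ≤ m := (Finset.mem_Icc.1 hm).1
    rw [card_filter_subset_powersetCard _ _ (Finset.subset_univ I) m hmI, hcardu]
    ring
  · intro m hm hnot
    have hm' : m < I.card := by
      simp only [Finset.mem_Icc] at hm hnot; omega
    have : ((Finset.powersetCard m (univ : Finset (Fin n))).filter fun s => I ⊆ s) = ∅ := by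
      rw [Finset.filter_eq_empty_iff]
      intro s hs hsub
      have h1 : s.card = m := (Finset.mem_powersetCard.1 hs).2
      have h2 := Finset.card_le_card hsub
      omega
    rw [this]
    simp

lemma masterE {n d k : ℕ} (hk : 1 ≤ k) (hkd : k ≤ d) (j : Fin d)
    (F : ℕ → ℝ) (I : Finset (Fin n)) :
    ∑ ω : Omega n d k,
        (F (Mcount ω j) * ∏ i ∈ I, (if j ∈ (ω i).1 then (1:ℝ) else 0))
      = (Fintype.card (Omega n d k) : ℝ) * ∑ m ∈ Finset.Icc I.card n,
          ((n - I.card).choose (m - I.card) : ℝ) * pr d k ^ m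
            * (1 - pr d k)^(n-m) * F m := by
  have hd : 1 ≤ d := hk.trans hkd
  have hdR : (0:ℝ) < (d:ℝ) := by exact_mod_cast hd
  have hC : (0:ℝ) < (d.choose k : ℝ) := by exact_mod_cast Nat.choose_pos hkd
  have hN : (Fintype.card (Omega n d k) : ℝ) = ((d.choose k : ℝ))^n := by
    rw [show Fintype.card (Omega n d k) = Fintype.card (KSub d k) ^ n by
      rw [Fintype.card_fun]; simp, Fintype.card_finset_len]
    push_cast
    simp [Fintype.card_fin]
  have hpa : ((d-1).choose (k-1) : ℝ) = pr d k * (d.choose k : ℝ) := by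
    have hnat : d * (d-1).choose (k-1) = d.choose k * k := by
      obtain ⟨d', rfl⟩ : ∃ d', d = d'+1 := ⟨d-1, by omega⟩
      obtain ⟨k', rfl⟩ : ∃ k', k = k'+1 := ⟨k-1, by omega⟩
      simpa using Nat.add_one_mul_choose_eq d' k'
    have : (d:ℝ) * ((d-1).choose (k-1) : ℝ) = (d.choose k : ℝ) * k := by exact_mod_cast hnat
    rw [pr]
    field_simp
    linarith [this]
  have hpascal : ((d-1).choose (k-1) : ℝ) + ((d-1).choose k : ℝ) = (d.choose k : ℝ) := by
    have : (d-1).choose (k-1) + (d-1).choose k = d.choose k := by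
      obtain ⟨d', rfl⟩ : ∃ d', d = d'+1 := ⟨d-1, by omega⟩
      obtain ⟨k', rfl⟩ : ∃ k', k = k'+1 := ⟨k-1, by omega⟩
      simp [Nat.choose_succ_succ]
    exact_mod_cast this
  have hqb : ((d-1).choose k : ℝ) = (1 - pr d k) * (d.choose k : ℝ) := by
    rw [sub_mul, one_mul, ← hpa]
    linarith [hpascal]
  rw [master hk hkd j F I, hN, Finset.mul_sum]
  refine Finset.sum_congr rfl fun m hm => ?_
  have hmn : m ≤ n := (Finset.mem_Icc.1 hm).2
  rw [hpa, hqb, mul_pow, mul_pow]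
  have hpow : (d.choose k : ℝ)^m * (d.choose k : ℝ)^(n-m) = (d.choose k : ℝ)^n := by
    rw [← pow_add]; congr 1; omega
  calc ((n - I.card).choose (m - I.card) : ℝ) * (pr d k ^ m * (d.choose k : ℝ)^m)
        * ((1 - pr d k)^(n-m) * (d.choose k : ℝ)^(n-m)) * F m
      = ((d.choose k : ℝ)^m * (d.choose k : ℝ)^(n-m)) *
          (((n - I.card).choose (m - I.card) : ℝ) * pr d k ^ m * (1 - pr d k)^(n-m) * F m) := by
        ring
    _ = _ := by rw [hpow]

end Aux

/-- Rand-k-Spatial estimation error: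
`E[‖x̂ − x̄‖²] = (1/n²)(d/k − 1)R₁ + (1/n²)(c₁R₁ − c₂R₂)`. -/
theorem spatial_mse (n d k : ℕ) (hn : 1 ≤ n) (hk : 1 ≤ k) (hkd : k ≤ d)
    (x : Fin n → Fin d → ℝ) (T : ℕ → ℝ) (hT : ∀ m ∈ Finset.Icc 1 n, 0 < T m)
    (R1 R2 c1 c2 : ℝ)
    (hR1 : R1 = ∑ i : Fin n, ∑ j : Fin d, x i j ^ 2)
    (hR2 : R2 = 2 * ∑ i : Fin n, ∑ l : Fin n,
        if i < l then ∑ j : Fin d, x i j * x l j else 0)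
    (hc1 : c1 = betaBar n d k T ^ 2 * (∑ m ∈ Finset.Icc 1 n,
        (pr d k / T m ^ 2) * ((n - 1).choose (m - 1) : ℝ) * pr d k ^ (m - 1)
          * (1 - pr d k) ^ (n - m)) - 1 / pr d k)
    (hc2 : c2 = 1 - betaBar n d k T ^ 2 * ∑ m ∈ Finset.Icc 2 n,
        (pr d k ^ 2 / T m ^ 2) * ((n - 2).choose (m - 2) : ℝ) * pr d k ^ (m - 2)
          * (1 - pr d k) ^ (n - m)) :
    mseSpatial n d k x T
      = (1 / (n : ℝ) ^ 2) * ((d : ℝ) / (k : ℝ) - 1) * R1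
        + (1 / (n : ℝ) ^ 2) * (c1 * R1 - c2 * R2) := by
  classical
  have hd : 1 ≤ d := hk.trans hkd
  set p := pr d k with hp
  set β := betaBar n d k T with hbdef
  set g : ℕ → ℝ := fun m => if 1 ≤ m then β / T m else 0 with hg
  set N : ℝ := (Fintype.card (Omega n d k) : ℝ) with hNdef
  have hNE : Nonempty (Omega n d k) := by
    obtain ⟨t, -, ht⟩ := Finset.exists_subset_card_eq
      (show k ≤ (univ : Finset (Fin d)).card by simpa using hkd)
    exact ⟨fun _ => ⟨t, ht⟩⟩
  have hNpos : 0 < N := by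
    rw [hNdef]
    exact_mod_cast Fintype.card_pos
  have hppos : 0 < p := by
    rw [hp, pr]
    have h1 : (0:ℝ) < (k:ℝ) := by exact_mod_cast hk
    have h2 : (0:ℝ) < (d:ℝ) := by exact_mod_cast hd
    positivity
  have hqnonneg : 0 ≤ 1 - p := by
    rw [hp, pr]
    have h2 : (0:ℝ) < (d:ℝ) := by exact_mod_cast hd
    have h3 : (k:ℝ) ≤ (d:ℝ) := by exact_mod_cast hkd
    have := div_le_one_of_le₀ h3 h2.le
    linarith
  set βS := ∑ m ∈ Finset.Icc 1 n,
      (p / T m) * ((n - 1).choose (m - 1) : ℝ) * p ^ (m - 1) * (1 - p) ^ (n - m) with hbS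
  have hbval : β = βS⁻¹ := by rw [hbdef, betaBar]
  have hbSpos : 0 < βS := by
    rw [hbS]
    refine Finset.sum_pos' (fun m hm => ?_) ⟨n, Finset.mem_Icc.2 ⟨hn, le_rfl⟩, ?_⟩
    · have hTm := hT m hm
      positivity
    · have hTn := hT n (Finset.mem_Icc.2 ⟨hn, le_rfl⟩)
      have h1 : ((n-1).choose (n-1) : ℝ) = 1 := by simp
      rw [h1, Nat.sub_self, pow_zero]
      have h2 : (0:ℝ) < p ^ (n-1) := pow_pos hppos _
      positivity
  have hbSne : βS ≠ 0 := ne_of_gt hbSpos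
  have hE1 : ∑ m ∈ Finset.Icc 1 n,
      ((n - 1).choose (m - 1) : ℝ) * p ^ m * (1 - p) ^ (n - m) * g m = 1 := by
    have hterm : ∀ m ∈ Finset.Icc 1 n,
        ((n - 1).choose (m - 1) : ℝ) * p ^ m * (1 - p) ^ (n - m) * g m
          = β * ((p / T m) * ((n - 1).choose (m - 1) : ℝ) * p ^ (m - 1) * (1 - p) ^ (n - m)) := by
      intro m hm
      have hm1 : 1 ≤ m := (Finset.mem_Icc.1 hm).1
      have hgm : g m = β / T m := if_pos hm1
      have hpm : p ^ m = p ^ (m - 1) * p := by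
        rw [← pow_succ]; congr 1; omega
      rw [hgm, hpm, div_eq_mul_inv, div_eq_mul_inv]
      ring
    rw [Finset.sum_congr rfl hterm, ← Finset.mul_sum, ← hbS, hbval]
    exact inv_mul_cancel₀ hbSne
  set A : ℝ := β ^ 2 * (∑ m ∈ Finset.Icc 1 n,
      (p / T m ^ 2) * ((n - 1).choose (m - 1) : ℝ) * p ^ (m - 1) * (1 - p) ^ (n - m)) with hA
  set B : ℝ := β ^ 2 * ∑ m ∈ Finset.Icc 2 n,
      (p ^ 2 / T m ^ 2) * ((n - 2).choose (m - 2) : ℝ) * p ^ (m - 2) * (1 - p) ^ (n - m) with hB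
  have hc1' : c1 = A - 1 / p := by rw [hc1]
  have hc2' : c2 = 1 - B := by rw [hc2]
  have hE2 : ∑ m ∈ Finset.Icc 1 n,
      ((n - 1).choose (m - 1) : ℝ) * p ^ m * (1 - p) ^ (n - m) * (g m) ^ 2 = A := by
    rw [hA, Finset.mul_sum]
    refine Finset.sum_congr rfl fun m hm => ?_
    have hm1 : 1 ≤ m := (Finset.mem_Icc.1 hm).1
    have hgm : g m = β / T m := if_pos hm1
    have hpm : p ^ m = p ^ (m - 1) * p := by
      rw [← pow_succ]; congr 1; omega
    rw [hgm, hpm, div_pow, div_eq_mul_inv, div_eq_mul_inv]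
    ring
  have hE3 : ∑ m ∈ Finset.Icc 2 n,
      ((n - 2).choose (m - 2) : ℝ) * p ^ m * (1 - p) ^ (n - m) * (g m) ^ 2 = B := by
    rw [hB, Finset.mul_sum]
    refine Finset.sum_congr rfl fun m hm => ?_
    have hm2 : 2 ≤ m := (Finset.mem_Icc.1 hm).1
    have hgm : g m = β / T m := if_pos (by omega)
    have hpm : p ^ m = p ^ (m - 2) * p ^ 2 := by
      rw [← pow_add]; congr 1; omega
    rw [hgm, hpm, div_pow, div_eq_mul_inv, div_eq_mul_inv]
    ring
  set χ : Fin d → Omega n d k → Fin n → ℝ :=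
    fun j ω i => if j ∈ (ω i).1 then (1:ℝ) else 0 with hχ
  have h1 : ∀ (j : Fin d) (i : Fin n),
      ∑ ω : Omega n d k, g (Mcount ω j) * χ j ω i = N := by
    intro j i
    have hm := masterE hk hkd j g {i}
    simp only [Finset.prod_singleton, Finset.card_singleton] at hm
    rw [show (∑ ω : Omega n d k, g (Mcount ω j) * χ j ω i)
        = ∑ ω : Omega n d k, g (Mcount ω j) * (if j ∈ (ω i).1 then (1:ℝ) else 0) from rfl,
      hm, ← hp, ← hNdef, hE1, mul_one]
  have h2 : ∀ (j : Fin d) (i : Fin n),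
      ∑ ω : Omega n d k, (g (Mcount ω j)) ^ 2 * χ j ω i = N * A := by
    intro j i
    have hm := masterE hk hkd j (fun m => (g m) ^ 2) {i}
    simp only [Finset.prod_singleton, Finset.card_singleton] at hm
    rw [show (∑ ω : Omega n d k, (g (Mcount ω j)) ^ 2 * χ j ω i)
        = ∑ ω : Omega n d k, (g (Mcount ω j)) ^ 2 * (if j ∈ (ω i).1 then (1:ℝ) else 0) from rfl,
      hm, ← hp, ← hNdef, hE2]
  have h3 : ∀ (j : Fin d) (i l : Fin n), i ≠ l →
      ∑ ω : Omega n d k, (g (Mcount ω j)) ^ 2 * (χ j ω i * χ j ω l) = N * B := by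
    intro j i l hil
    have hm := masterE hk hkd j (fun m => (g m) ^ 2) {i, l}
    rw [Finset.card_pair hil] at hm
    have hpp : ∀ ω : Omega n d k,
        (∏ i' ∈ ({i, l} : Finset (Fin n)), (if j ∈ (ω i').1 then (1:ℝ) else 0))
          = χ j ω i * χ j ω l := by
      intro ω
      rw [Finset.prod_pair hil]
    simp only [hpp] at hm
    rw [show (∑ ω : Omega n d k, (g (Mcount ω j)) ^ 2 * (χ j ω i * χ j ω l))
        = ∑ ω : Omega n d k, (g (Mcount ω j)) ^ 2 * (χ j ω i * χ j ω l) from rfl,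
      hm, ← hp, ← hNdef, hE3]
  have hkey : ∀ (j : Fin d) (i l : Fin n),
      ∑ ω : Omega n d k,
          (g (Mcount ω j) * χ j ω i - 1) * (g (Mcount ω j) * χ j ω l - 1)
        = N * ((if i = l then A else B) - 1) := by
    intro j i l
    have hexp : ∀ ω : Omega n d k,
        (g (Mcount ω j) * χ j ω i - 1) * (g (Mcount ω j) * χ j ω l - 1)
          = (g (Mcount ω j)) ^ 2 * (χ j ω i * χ j ω l)
              - g (Mcount ω j) * χ j ω i - g (Mcount ω j) * χ j ω l + 1 := fun ω => by ring
    rw [Finset.sum_congr rfl fun ω _ => hexp ω, Finset.sum_add_distrib,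
      Finset.sum_sub_distrib, Finset.sum_sub_distrib, h1 j i, h1 j l, Finset.sum_const]
    have hNcard : ((Finset.univ : Finset (Omega n d k)).card • (1:ℝ)) = N := by
      rw [nsmul_eq_mul, mul_one, hNdef, Finset.card_univ]
    rw [hNcard]
    by_cases hil : i = l
    · subst hil
      have hχχ : ∀ ω : Omega n d k, χ j ω i * χ j ω i = χ j ω i := by
        intro ω
        by_cases hc : j ∈ (ω i).1 <;> simp [hχ, hc]
      rw [show (∑ ω : Omega n d k, (g (Mcount ω j)) ^ 2 * (χ j ω i * χ j ω i))
          = ∑ ω : Omega n d k, (g (Mcount ω j)) ^ 2 * χ j ω i from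
        Finset.sum_congr rfl fun ω _ => by rw [hχχ ω], h2 j i, if_pos rfl]
      ring
    · rw [h3 j i l hil, if_neg hil]
      ring
  have hintegrand : ∀ (ω : Omega n d k) (j : Fin d),
      (spatialEst x T ω j - (1 / (n:ℝ)) * ∑ i : Fin n, x i j) ^ 2
        = (1 / (n:ℝ) ^ 2) * ∑ i : Fin n, ∑ l : Fin n,
            ((g (Mcount ω j) * χ j ω i - 1) * (g (Mcount ω j) * χ j ω l - 1))
              * (x i j * x l j) := by
    intro ω j
    have hdiff : spatialEst x T ω j - (1 / (n:ℝ)) * ∑ i : Fin n, x i j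
        = (1 / (n:ℝ)) * ∑ i : Fin n, (g (Mcount ω j) * χ j ω i - 1) * x i j := by
      rw [spatialEst]
      by_cases h : 1 ≤ Mcount ω j
      · rw [if_pos h]
        have hgv : g (Mcount ω j) = β / T (Mcount ω j) := if_pos h
        have hsp : ∀ i, spars x ω i j = χ j ω i * x i j := by
          intro i
          rw [spars]
          by_cases hc : j ∈ (ω i).1 <;> simp [hχ, hc]
        have hterm : ∀ i : Fin n, (g (Mcount ω j) * χ j ω i - 1) * x i j
            = g (Mcount ω j) * (χ j ω i * x i j) - x i j := fun i => by ring
        rw [Finset.sum_congr rfl fun i (_ : i ∈ Finset.univ) => hsp i,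
          Finset.sum_congr rfl fun i (_ : i ∈ Finset.univ) => hterm i,
          Finset.sum_sub_distrib, ← Finset.mul_sum, hgv, ← hbdef]
        ring
      · rw [if_neg h]
        have hgv : g (Mcount ω j) = 0 := by
          have h0 : Mcount ω j = 0 := by omega
          rw [h0]; rfl
        rw [hgv]
        have hterm : ∀ i : Fin n, ((0:ℝ) * χ j ω i - 1) * x i j = -(x i j) :=
          fun i => by ring
        rw [Finset.sum_congr rfl fun i (_ : i ∈ Finset.univ) => hterm i, Finset.sum_neg_distrib]
        ring
    rw [hdiff, mul_pow, sq (∑ i : Fin n, (g (Mcount ω j) * χ j ω i - 1) * x i j),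
      Finset.sum_mul_sum]
    rw [show (1 / (n:ℝ)) ^ 2 = 1 / (n:ℝ) ^ 2 by rw [div_pow, one_pow]]
    congr 1
    refine Finset.sum_congr rfl fun i _ => Finset.sum_congr rfl fun l _ => by ring
  have hsum : (∑ ω : Omega n d k, ∑ j : Fin d,
      (spatialEst x T ω j - (1 / (n:ℝ)) * ∑ i : Fin n, x i j) ^ 2)
      = N * ∑ j : Fin d, (1 / (n:ℝ) ^ 2) * ∑ i : Fin n, ∑ l : Fin n,
          ((if i = l then A else B) - 1) * (x i j * x l j) := by
    rw [Finset.sum_congr rfl fun ω (_ : ω ∈ Finset.univ) =>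
      Finset.sum_congr rfl fun j _ => hintegrand ω j, Finset.sum_comm, Finset.mul_sum]
    refine Finset.sum_congr rfl fun j _ => ?_
    rw [← Finset.mul_sum, ← mul_assoc, mul_comm N (1 / (n:ℝ)^2), mul_assoc]
    congr 1
    rw [Finset.sum_comm]
    rw [Finset.sum_congr rfl fun i (_ : i ∈ Finset.univ) => Finset.sum_comm]
    rw [Finset.mul_sum]
    refine Finset.sum_congr rfl fun i _ => ?_
    rw [Finset.mul_sum]
    refine Finset.sum_congr rfl fun l _ => ?_
    rw [show (∑ ω : Omega n d k,
        ((g (Mcount ω j) * χ j ω i - 1) * (g (Mcount ω j) * χ j ω l - 1)) * (x i j * x l j))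
        = (∑ ω : Omega n d k,
        (g (Mcount ω j) * χ j ω i - 1) * (g (Mcount ω j) * χ j ω l - 1)) * (x i j * x l j) from
      (Finset.sum_mul _ _ _).symm, hkey j i l]
    ring
  rw [mseSpatial, Exp, ← hNdef, hsum, mul_comm N _, mul_div_assoc, div_self (ne_of_gt hNpos),
    mul_one]
  set P : Fin n → Fin n → ℝ := fun i l => ∑ j : Fin d, x i j * x l j with hP
  have hswap : ∑ j : Fin d, (1 / (n:ℝ) ^ 2) * ∑ i : Fin n, ∑ l : Fin n,
      ((if i = l then A else B) - 1) * (x i j * x l j)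
      = (1 / (n:ℝ) ^ 2) * ∑ i : Fin n, ∑ l : Fin n,
          ((if i = l then A else B) - 1) * P i l := by
    rw [← Finset.mul_sum]
    congr 1
    rw [Finset.sum_comm]
    refine Finset.sum_congr rfl fun i _ => ?_
    rw [Finset.sum_comm]
    refine Finset.sum_congr rfl fun l _ => ?_
    rw [hP, Finset.mul_sum]
  rw [hswap]
  have hPsymm : ∀ i l, P l i = P i l := by
    intro i l
    rw [hP]
    exact Finset.sum_congr rfl fun j _ => mul_comm _ _
  have hterm : ∀ i l : Fin n, ((if i = l then A else B) - 1) * P i l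
      = (if i = l then (A - 1) * P i l else 0)
        + ((B - 1) * (if i < l then P i l else 0)
          + (B - 1) * (if l < i then P i l else 0)) := by
    intro i l
    rcases lt_trichotomy i l with h | h | h
    · simp only [if_neg (ne_of_lt h), if_pos h, if_neg (asymm h)]
      ring
    · subst h
      rw [if_pos rfl, if_pos rfl, if_neg (lt_irrefl i)]
      ring
    · simp only [if_neg (ne_of_gt h), if_pos h, if_neg (asymm h)]
      ring
  have hsplit : ∑ i : Fin n, ∑ l : Fin n, ((if i = l then A else B) - 1) * P i l
      = (A - 1) * (∑ i : Fin n, P i i)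
        + (B - 1) * (2 * ∑ i : Fin n, ∑ l : Fin n, if i < l then P i l else 0) := by
    rw [Finset.sum_congr rfl fun i (_ : i ∈ Finset.univ) =>
      Finset.sum_congr rfl fun l (_ : l ∈ Finset.univ) => hterm i l]
    simp only [Finset.sum_add_distrib]
    have hp1 : ∑ i : Fin n, ∑ l : Fin n, (if i = l then (A - 1) * P i l else 0)
        = (A - 1) * ∑ i : Fin n, P i i := by
      rw [Finset.mul_sum]
      refine Finset.sum_congr rfl fun i _ => ?_
      rw [Finset.sum_ite_eq]
      simp
    have hp2 : ∑ i : Fin n, ∑ l : Fin n, (B - 1) * (if i < l then P i l else 0)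
        = (B - 1) * ∑ i : Fin n, ∑ l : Fin n, (if i < l then P i l else 0) := by
      rw [Finset.mul_sum]
      exact Finset.sum_congr rfl fun i _ => (Finset.mul_sum _ _ _).symm
    have hp3 : ∑ i : Fin n, ∑ l : Fin n, (B - 1) * (if l < i then P i l else 0)
        = (B - 1) * ∑ i : Fin n, ∑ l : Fin n, (if i < l then P i l else 0) := by
      rw [Finset.sum_comm]
      rw [Finset.sum_congr rfl fun l (_ : l ∈ Finset.univ) =>
        Finset.sum_congr rfl fun i (_ : i ∈ Finset.univ) =>
          (by rw [hPsymm i l] : (B - 1) * (if l < i then P i l else 0)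
            = (B - 1) * (if l < i then P l i else 0))]
      rw [Finset.mul_sum]
      exact Finset.sum_congr rfl fun l _ => (Finset.mul_sum _ _ _).symm
    rw [hp1, hp2, hp3]
    ring
  have hdk : (d:ℝ) / (k:ℝ) = 1 / p := by
    rw [hp, pr, one_div_div]
  have hR1' : ∑ i : Fin n, P i i = R1 := by
    rw [hR1]
    exact Finset.sum_congr rfl fun i _ => Finset.sum_congr rfl fun j _ => (sq (x i j)).symm
  rw [hsplit, hR1', hdk, hc1', hc2', hR2]
  ring
end
end

section
/- The mean squared error of the Rand-k-Temporal estimator equals E[||x̂ − x̄||²] = (1/n²)·(d/k − 1)·Σ_{i=1}^n ||x_i − b_i||², where the expectation is over the random choice of the subsets S_1,…,S_n. -/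
open Finset

noncomputable section

/-- The filled-in vector `h'_i`: `h'_{ij} = b_{ij} + (d/k)(x_{ij} − b_{ij})`
if `j ∈ S_i`, and `h'_{ij} = b_{ij}` otherwise. -/
def fill {n d k : ℕ} (x b : Fin n → Fin d → ℝ) (ω : Omega n d k) (i : Fin n)
    (j : Fin d) : ℝ :=
  if j ∈ (ω i).1 then b i j + ((d : ℝ) / (k : ℝ)) * (x i j - b i j) else b i j

/-- number of `k`-subsets of `Fin d` containing a fixed `j` -/
lemma count_mem_powersetCard (d k : ℕ) (hk : 1 ≤ k) (j : Fin d) :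
    ((Finset.powersetCard k (univ : Finset (Fin d))).filter (fun S => j ∈ S)).card
      = (d - 1).choose (k - 1) := by
  obtain ⟨k', rfl⟩ : ∃ k', k = k' + 1 := ⟨k - 1, (Nat.succ_pred_eq_of_pos hk).symm⟩
  rw [show (k' + 1 - 1) = k' from rfl]
  rw [Finset.card_bij' (fun S _ => S.erase j)
      (fun T _ => insert j T)
      (t := Finset.powersetCard k' (Finset.erase univ j))
      ?_ ?_ ?_ ?_]
  · rw [Finset.card_powersetCard, Finset.card_erase_of_mem (mem_univ j), Finset.card_fin]
  · intro S hS
    simp only [mem_filter, mem_powersetCard] at hS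
    rw [mem_powersetCard]
    refine ⟨Finset.erase_subset_erase j (Finset.subset_univ S), ?_⟩
    rw [Finset.card_erase_of_mem hS.2, hS.1.2]
    omega
  · intro T hT
    rw [mem_powersetCard] at hT
    have hjT : j ∉ T := fun h => (Finset.notMem_erase j univ) (hT.1 h)
    simp only [mem_filter, mem_powersetCard]
    exact ⟨⟨Finset.subset_univ _, by rw [Finset.card_insert_of_notMem hjT, hT.2]⟩,
      Finset.mem_insert_self j T⟩
  · intro S hS
    simp only [mem_filter] at hS
    exact Finset.insert_erase hS.2
  · intro T hT
    rw [mem_powersetCard] at hT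
    exact Finset.erase_insert (fun h => (Finset.notMem_erase j univ) (hT.1 h))

lemma sum_fun_eval {n : ℕ} {T : Type*} [Fintype T] (i : Fin n) (F : T → ℝ) :
    ∑ ω : Fin n → T, F (ω i) = (Fintype.card T : ℝ) ^ (n - 1) * ∑ t, F t := by
  have lhs : ∀ ω : Fin n → T, (∏ m, if m = i then F (ω m) else 1) = F (ω i) := by
    intro ω
    rw [Finset.prod_eq_single i (fun m _ hm => if_neg hm) (by simp)]
    simp
  have rhs : ∀ m : Fin n, (∑ t, if m = i then F t else (1 : ℝ))
      = if m = i then ∑ t, F t else (Fintype.card T : ℝ) := by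
    intro m
    by_cases hm : m = i <;> simp [hm, Finset.card_univ]
  calc ∑ ω : Fin n → T, F (ω i)
      = ∑ ω : Fin n → T, ∏ m, (if m = i then F (ω m) else 1) := by
        exact Finset.sum_congr rfl fun ω _ => (lhs ω).symm
    _ = ∏ m, ∑ t, (if m = i then F t else (1:ℝ)) :=
        (Fintype.prod_sum (fun (m : Fin n) (t : T) => if m = i then F t else (1:ℝ))).symm
    _ = ∏ m : Fin n, (if m = i then ∑ t, F t else (Fintype.card T : ℝ)) := by
        exact Finset.prod_congr rfl fun m _ => rhs m
    _ = (∑ t, F t) * ∏ m ∈ univ.erase i, (Fintype.card T : ℝ) := by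
        rw [← Finset.mul_prod_erase univ _ (mem_univ i), if_pos rfl]
        congr 1
        exact Finset.prod_congr rfl fun m hm => if_neg (Finset.ne_of_mem_erase hm)
    _ = (Fintype.card T : ℝ) ^ (n - 1) * ∑ t, F t := by
        rw [Finset.prod_const, Finset.card_erase_of_mem (mem_univ i),
          Finset.card_univ, Fintype.card_fin, mul_comm]

lemma sum_fun_eval_two {n : ℕ} {T : Type*} [Fintype T] {i i' : Fin n} (hne : i ≠ i')
    (F G : T → ℝ) :
    ∑ ω : Fin n → T, F (ω i) * G (ω i')
      = (Fintype.card T : ℝ) ^ (n - 2) * (∑ t, F t) * (∑ t, G t) := by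
  have lhs : ∀ ω : Fin n → T,
      (∏ m, if m = i then F (ω m) else if m = i' then G (ω m) else 1)
        = F (ω i) * G (ω i') := by
    intro ω
    have h1 : i' ∈ univ.erase i := Finset.mem_erase.2 ⟨(Ne.symm hne), mem_univ _⟩
    rw [← Finset.mul_prod_erase univ _ (mem_univ i), if_pos rfl,
      ← Finset.mul_prod_erase _ _ h1, if_neg (Ne.symm hne), if_pos rfl]
    have : ∏ m ∈ (univ.erase i).erase i',
        (if m = i then F (ω m) else if m = i' then G (ω m) else 1) = 1 := by
      refine Finset.prod_eq_one fun m hm => ?_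
      rw [Finset.mem_erase, Finset.mem_erase] at hm
      rw [if_neg hm.2.1, if_neg hm.1]
    rw [this, mul_one]
  have rhs : ∀ m : Fin n, (∑ t, if m = i then F t else if m = i' then G t else (1 : ℝ))
      = if m = i then ∑ t, F t else if m = i' then ∑ t, G t else (Fintype.card T : ℝ) := by
    intro m
    by_cases h1 : m = i
    · simp [h1]
    by_cases h2 : m = i' <;> simp [h1, h2, Finset.card_univ]
  calc ∑ ω : Fin n → T, F (ω i) * G (ω i')
      = ∑ ω : Fin n → T, ∏ m, (if m = i then F (ω m) else if m = i' then G (ω m) else 1) :=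
        Finset.sum_congr rfl fun ω _ => (lhs ω).symm
    _ = ∏ m, ∑ t, (if m = i then F t else if m = i' then G t else (1:ℝ)) :=
        (Fintype.prod_sum
          (fun (m : Fin n) (t : T) => if m = i then F t else if m = i' then G t else (1:ℝ))).symm
    _ = ∏ m : Fin n, (if m = i then ∑ t, F t else if m = i' then ∑ t, G t
          else (Fintype.card T : ℝ)) := Finset.prod_congr rfl fun m _ => rhs m
    _ = (Fintype.card T : ℝ) ^ (n - 2) * (∑ t, F t) * (∑ t, G t) := by
        have h1 : i' ∈ univ.erase i := Finset.mem_erase.2 ⟨(Ne.symm hne), mem_univ _⟩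
        rw [← Finset.mul_prod_erase univ _ (mem_univ i), if_pos rfl,
          ← Finset.mul_prod_erase _ _ h1, if_neg (Ne.symm hne), if_pos rfl]
        have : ∏ m ∈ (univ.erase i).erase i',
            (if m = i then ∑ t, F t else if m = i' then ∑ t, G t
              else (Fintype.card T : ℝ)) = (Fintype.card T : ℝ) ^ (n - 2) := by
          rw [Finset.prod_congr rfl (fun m hm => ?_), Finset.prod_const,
            Finset.card_erase_of_mem h1, Finset.card_erase_of_mem (mem_univ i),
            Finset.card_univ, Fintype.card_fin, Nat.sub_sub]
          rw [Finset.mem_erase, Finset.mem_erase] at hm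
          rw [if_neg hm.2.1, if_neg hm.1]
        rw [this]; ring

/-- Rand-k-Temporal estimation error:
`E[‖x̂ − x̄‖²] = (1/n²)(d/k − 1) Σᵢ ‖xᵢ − bᵢ‖²`, where `x̂ = (1/n) Σᵢ h'ᵢ`. -/
theorem temporal_mse (n d k : ℕ) (hn : 1 ≤ n) (hk : 1 ≤ k) (hkd : k ≤ d)
    (x b : Fin n → Fin d → ℝ) :
    Exp (fun ω : Omega n d k =>
        ∑ j : Fin d,
          ((1 / (n : ℝ)) * ∑ i : Fin n, fill x b ω i j
            - (1 / (n : ℝ)) * ∑ i : Fin n, x i j) ^ 2)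
      = (1 / (n : ℝ) ^ 2) * ((d : ℝ) / (k : ℝ) - 1)
          * ∑ i : Fin n, ∑ j : Fin d, (x i j - b i j) ^ 2 := by
  classical
  have hn0 : (n : ℝ) ≠ 0 := Nat.cast_ne_zero.2 (by omega)
  have hk0 : (k : ℝ) ≠ 0 := Nat.cast_ne_zero.2 (by omega)
  -- the set of k-subsets
  set N : ℕ := Fintype.card (KSub d k) with hN
  have hNchoose : N = d.choose k := by
    rw [hN, Fintype.card_subtype]
    have : Finset.filter (fun S : Finset (Fin d) => S.card = k) univ
        = Finset.powersetCard k (univ : Finset (Fin d)) := by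
      rw [Finset.powersetCard_eq_filter, Finset.powerset_univ]
    rw [this, Finset.card_powersetCard, Finset.card_univ, Fintype.card_fin]
  have hNpos : 0 < N := by
    rw [hNchoose]
    exact Nat.choose_pos hkd
  have hN0 : (N : ℝ) ≠ 0 := Nat.cast_ne_zero.2 (by omega)
  set c : Fin d → KSub d k → ℝ :=
    fun j S => (d : ℝ) / (k : ℝ) * (if j ∈ S.1 then 1 else 0) - 1 with hc
  set M : ℕ := (d - 1).choose (k - 1) with hM
  have keynat : d * M = d.choose k * k := by
    rw [hM]
    obtain ⟨d', rfl⟩ : ∃ d', d = d' + 1 := ⟨d - 1, by omega⟩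
    obtain ⟨k', rfl⟩ : ∃ k', k = k' + 1 := ⟨k - 1, by omega⟩
    simpa using Nat.add_one_mul_choose_eq d' k'
  have keyreal : (d : ℝ) / (k : ℝ) * (M : ℝ) = (N : ℝ) := by
    rw [div_mul_eq_mul_div, div_eq_iff hk0, hNchoose]
    exact_mod_cast keynat
  have hind : ∀ j : Fin d, ∑ S : KSub d k, (if j ∈ S.1 then (1:ℝ) else 0) = (M : ℝ) := by
    intro j
    have h1 : ∑ S ∈ Finset.powersetCard k (univ : Finset (Fin d)),
        (if j ∈ S then (1:ℝ) else 0) = ∑ S : KSub d k, (if j ∈ S.1 then (1:ℝ) else 0) :=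
      Finset.sum_subtype _ (fun S => by simp [Finset.mem_powersetCard_univ]) _
    rw [← h1, Finset.sum_boole, count_mem_powersetCard d k hk j, hM]
  have S0 : ∀ j : Fin d, ∑ S : KSub d k, c j S = 0 := by
    intro j
    simp only [hc]
    rw [Finset.sum_sub_distrib, ← Finset.mul_sum, hind j, keyreal]
    simp [Finset.card_univ, hNchoose]
  have S2 : ∀ j : Fin d, ∑ S : KSub d k, (c j S) ^ 2 = ((d : ℝ) / (k : ℝ) - 1) * (N : ℝ) := by
    intro j
    have hpt : ∀ S : KSub d k, (c j S) ^ 2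
        = (((d : ℝ) / k) ^ 2 - 2 * ((d : ℝ) / k)) * (if j ∈ S.1 then (1:ℝ) else 0) + 1 := by
      intro S
      simp only [hc]
      by_cases h : j ∈ S.1 <;> simp [h] <;> ring
    rw [Finset.sum_congr rfl (fun S _ => hpt S), Finset.sum_add_distrib,
      ← Finset.mul_sum, hind j]
    simp only [Finset.sum_const, Finset.card_univ, ← hN, nsmul_eq_mul, mul_one]
    linear_combination ((d : ℝ) / k - 2) * keyreal
  have hfill : ∀ (ω : Omega n d k) (i : Fin n) (j : Fin d),
      fill x b ω i j - x i j = c j (ω i) * (x i j - b i j) := by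
    intro ω i j
    simp only [fill, hc]
    by_cases h : j ∈ (ω i).1 <;> simp [h] <;> ring
  have hinner : ∀ (j : Fin d) (i i' : Fin n),
      ∑ ω : Omega n d k, c j (ω i) * c j (ω i')
        = if i = i' then (N : ℝ) ^ (n - 1) * (((d : ℝ) / k - 1) * N) else 0 := by
    intro j i i'
    by_cases h : i = i'
    · subst h
      rw [if_pos rfl]
      simp only [← sq]
      rw [sum_fun_eval (T := KSub d k) i (fun S => c j S ^ 2), S2 j, ← hN]
    · rw [if_neg h, sum_fun_eval_two h (fun S => c j S) (fun S => c j S), S0]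
      ring
  -- main computation
  have hcardΩ : (Fintype.card (Omega n d k) : ℝ) = (N : ℝ) ^ n := by
    rw [Fintype.card_fun, Fintype.card_fin, hN]
    push_cast
    ring
  have hsum : ∑ ω : Omega n d k,
      ∑ j : Fin d, ((1 / (n : ℝ)) * ∑ i : Fin n, fill x b ω i j
          - (1 / (n : ℝ)) * ∑ i : Fin n, x i j) ^ 2
      = (N : ℝ) ^ n * ((1 / (n : ℝ) ^ 2) * ((d : ℝ) / (k : ℝ) - 1)
          * ∑ i : Fin n, ∑ j : Fin d, (x i j - b i j) ^ 2) := by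
    have step1 : ∀ (ω : Omega n d k) (j : Fin d),
        ((1 / (n : ℝ)) * ∑ i : Fin n, fill x b ω i j
          - (1 / (n : ℝ)) * ∑ i : Fin n, x i j) ^ 2
        = (1 / (n : ℝ) ^ 2) * ∑ i : Fin n, ∑ i' : Fin n,
            (x i j - b i j) * (x i' j - b i' j) * (c j (ω i) * c j (ω i')) := by
      intro ω j
      have : (1 / (n : ℝ)) * ∑ i : Fin n, fill x b ω i j
          - (1 / (n : ℝ)) * ∑ i : Fin n, x i j
          = (1 / (n : ℝ)) * ∑ i : Fin n, c j (ω i) * (x i j - b i j) := by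
        rw [← mul_sub, ← Finset.sum_sub_distrib]
        congr 1
        exact Finset.sum_congr rfl fun i _ => by rw [hfill ω i j]
      have hA : (∑ i : Fin n, c j (ω i) * (x i j - b i j)) ^ 2
          = ∑ i : Fin n, ∑ i' : Fin n,
              (x i j - b i j) * (x i' j - b i' j) * (c j (ω i) * c j (ω i')) := by
        rw [sq, Finset.sum_mul_sum]
        exact Finset.sum_congr rfl fun i _ => Finset.sum_congr rfl fun i' _ => by ring
      rw [this, mul_pow, hA]
      ring
    calc ∑ ω : Omega n d k, ∑ j : Fin d,
          ((1 / (n : ℝ)) * ∑ i : Fin n, fill x b ω i j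
            - (1 / (n : ℝ)) * ∑ i : Fin n, x i j) ^ 2
        = ∑ ω : Omega n d k, ∑ j : Fin d, (1 / (n : ℝ) ^ 2) * ∑ i : Fin n, ∑ i' : Fin n,
            (x i j - b i j) * (x i' j - b i' j) * (c j (ω i) * c j (ω i')) :=
          Finset.sum_congr rfl fun ω _ => Finset.sum_congr rfl fun j _ => step1 ω j
      _ = ∑ j : Fin d, (1 / (n : ℝ) ^ 2) * ∑ i : Fin n, ∑ i' : Fin n,
            (x i j - b i j) * (x i' j - b i' j)
              * ∑ ω : Omega n d k, c j (ω i) * c j (ω i') := by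
          rw [Finset.sum_comm]
          refine Finset.sum_congr rfl fun j _ => ?_
          rw [← Finset.mul_sum]
          congr 1
          rw [Finset.sum_comm]
          refine Finset.sum_congr rfl fun i _ => ?_
          rw [Finset.sum_comm]
          refine Finset.sum_congr rfl fun i' _ => ?_
          rw [← Finset.mul_sum]
      _ = ∑ j : Fin d, (1 / (n : ℝ) ^ 2) * ∑ i : Fin n,
            (x i j - b i j) ^ 2 * ((N : ℝ) ^ (n - 1) * (((d : ℝ) / k - 1) * N)) := by
          refine Finset.sum_congr rfl fun j _ => ?_
          congr 1
          refine Finset.sum_congr rfl fun i _ => ?_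
          have hterm : ∀ i' : Fin n, (x i j - b i j) * (x i' j - b i' j)
              * ∑ ω : Omega n d k, c j (ω i) * c j (ω i')
              = if i = i' then (x i j - b i j) * (x i' j - b i' j)
                  * ((N : ℝ) ^ (n - 1) * (((d : ℝ) / k - 1) * N)) else 0 := by
            intro i'
            rw [hinner j i i', mul_ite, mul_zero]
          rw [Finset.sum_congr rfl fun i' _ => hterm i',
            Finset.sum_ite_eq (univ : Finset (Fin n)) i
              (fun i' => (x i j - b i j) * (x i' j - b i' j)
                * ((N : ℝ) ^ (n - 1) * (((d : ℝ) / k - 1) * N))),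
            if_pos (mem_univ i), ← sq]
      _ = (N : ℝ) ^ n * ((1 / (n : ℝ) ^ 2) * ((d : ℝ) / (k : ℝ) - 1)
            * ∑ i : Fin n, ∑ j : Fin d, (x i j - b i j) ^ 2) := by
          have hpow : (N : ℝ) ^ (n - 1) * (N : ℝ) = (N : ℝ) ^ n := by
            rw [← pow_succ]
            congr 1
            omega
          have h1 : ∀ j : Fin d, (1 / (n : ℝ) ^ 2) * ∑ i : Fin n,
              (x i j - b i j) ^ 2 * ((N : ℝ) ^ (n - 1) * (((d : ℝ) / k - 1) * N))
              = ((N : ℝ) ^ n * ((1 / (n : ℝ) ^ 2) * ((d : ℝ) / k - 1)))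
                  * ∑ i : Fin n, (x i j - b i j) ^ 2 := by
            intro j
            rw [← Finset.sum_mul, ← hpow]
            ring
          rw [Finset.sum_congr rfl fun j _ => h1 j, ← Finset.mul_sum]
          conv_lhs => rw [Finset.sum_comm]
          ring
  rw [Exp, hsum, hcardΩ]
  field_simp
end
end

section
/- One-step descent identity for the quadratic case study: fix w, b_1,…,b_n ∈ ℝ^d and η ∈ ℝ, let x̂ be the Rand-k-Temporal estimate of (1/n)·Σ_{i=1}^n ∇F_i(w) computed from one round of sparsification with memories b_1,…,b_n, and let w⁺ = w − η·x̂. Then E[||w⁺ − w*||²] = (1−η)²·||w − w*||² + η²·α·(1/n)·Σ_{i=1}^n ||∇F_i(w) − b_i||², where the expectation is over the random subsets S_1,…,S_n of that round. -/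
open Finset

noncomputable section

/-- indicator-like function with mean zero. -/
def gfun (d k : ℕ) (j : Fin d) (S : KSub d k) : ℝ :=
  (d : ℝ) / (k : ℝ) * (if j ∈ S.1 then 1 else 0) - 1

lemma count_mem (d k : ℕ) (hk : 1 ≤ k) (hkd : k ≤ d) (j : Fin d) :
    d * (univ.filter fun S : KSub d k => j ∈ S.1).card = d.choose k * k := by
  have h1 : (univ.filter fun S : KSub d k => j ∈ S.1).card
      = (((univ : Finset (Fin d)).erase j).powersetCard (k - 1)).card := by
    apply Finset.card_bij (fun S _ => S.1.erase j)
    · intro S hS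
      simp only [mem_filter, mem_univ, true_and] at hS
      simp only [Finset.mem_powersetCard]
      constructor
      · intro x hx
        simp only [Finset.mem_erase] at hx ⊢
        exact ⟨hx.1, mem_univ _⟩
      · rw [Finset.card_erase_of_mem hS, S.2]
    · intro S hS S' hS' hEq
      simp only [mem_filter, mem_univ, true_and] at hS hS'
      apply Subtype.ext
      have := congrArg (insert j) hEq
      rwa [Finset.insert_erase hS, Finset.insert_erase hS'] at this
    · intro t ht
      simp only [Finset.mem_powersetCard] at ht
      have hj : j ∉ t := fun h => (Finset.mem_erase.mp (ht.1 h)).1 rfl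
      refine ⟨⟨insert j t, ?_⟩, ?_, ?_⟩
      · rw [Finset.card_insert_of_notMem hj, ht.2]
        omega
      · simp
      · simp [Finset.erase_insert hj]
    
  rw [h1, Finset.card_powersetCard]
  rw [Finset.card_erase_of_mem (mem_univ j), Finset.card_univ, Fintype.card_fin]
  -- d * (d-1).choose (k-1) = d.choose k * k
  obtain ⟨d', rfl⟩ : ∃ d', d = d' + 1 := ⟨d - 1, by omega⟩
  obtain ⟨k', rfl⟩ : ∃ k', k = k' + 1 := ⟨k - 1, by omega⟩
  simpa using Nat.add_one_mul_choose_eq d' k'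

lemma sum_ind (d k : ℕ) (hk : 1 ≤ k) (hkd : k ≤ d) (j : Fin d) :
    (d : ℝ) / (k : ℝ) * ∑ S : KSub d k, (if j ∈ S.1 then (1:ℝ) else 0)
      = (d.choose k : ℝ) := by
  have hkne : (k : ℝ) ≠ 0 := Nat.cast_ne_zero.mpr (by omega)
  have hc := count_mem d k hk hkd j
  have hcR : (d : ℝ) * ((univ.filter fun S : KSub d k => j ∈ S.1).card : ℝ)
      = (d.choose k : ℝ) * k := by exact_mod_cast congrArg (Nat.cast (R := ℝ)) hc
  rw [Finset.sum_boole]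
  field_simp
  linarith [hcR]

lemma sum_gfun (d k : ℕ) (hk : 1 ≤ k) (hkd : k ≤ d) (j : Fin d) :
    ∑ S : KSub d k, gfun d k j S = 0 := by
  have h := sum_ind d k hk hkd j
  simp only [gfun, Finset.sum_sub_distrib, ← Finset.mul_sum, Finset.sum_const,
    Finset.card_univ, card_KSub, nsmul_eq_mul, mul_one]
  rw [h]; ring

lemma sum_gfun_sq (d k : ℕ) (hk : 1 ≤ k) (hkd : k ≤ d) (j : Fin d) :
    ∑ S : KSub d k, (gfun d k j S) ^ 2
      = ((d : ℝ) / (k : ℝ) - 1) * (d.choose k : ℝ) := by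
  have h := sum_ind d k hk hkd j
  have hpt : ∀ S : KSub d k, (gfun d k j S) ^ 2
      = ((d : ℝ)/(k : ℝ) - 2) * ((d : ℝ)/(k : ℝ) * (if j ∈ S.1 then (1:ℝ) else 0)) + 1 := by
    intro S
    unfold gfun
    by_cases hj : j ∈ S.1 <;> simp [hj] <;> ring
  rw [Finset.sum_congr rfl fun S _ => hpt S]
  rw [Finset.sum_add_distrib, ← Finset.mul_sum, ← Finset.mul_sum, h]
  simp [Finset.card_univ, card_KSub]
  ring

lemma sum_pi_one {n d k : ℕ} (f : KSub d k → ℝ) (i : Fin n) :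
    ∑ ω : Omega n d k, f (ω i)
      = (d.choose k : ℝ) ^ (n - 1) * ∑ S : KSub d k, f S := by
  classical
  set F : Fin n → KSub d k → ℝ := fun i' => if i' = i then f else fun _ => 1 with hF
  have h1 : ∑ ω : Omega n d k, f (ω i) = ∑ ω : Omega n d k, ∏ i', F i' (ω i') := by
    refine Finset.sum_congr rfl fun ω _ => ?_
    rw [← Finset.mul_prod_erase univ _ (mem_univ i),
      Finset.prod_eq_one (fun x hx => by simp [hF, Finset.ne_of_mem_erase hx])]
    simp [hF]
  rw [h1, ← Fintype.prod_sum F,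
    ← Finset.mul_prod_erase univ _ (mem_univ i),
    Finset.prod_eq_pow_card (b := (d.choose k : ℝ))
      (fun x hx => by simp [hF, Finset.ne_of_mem_erase hx, Finset.card_univ, card_KSub]),
    Finset.card_erase_of_mem (mem_univ i), Finset.card_univ, Fintype.card_fin]
  simp [hF]
  ring

lemma sum_pi_two {n d k : ℕ} (f g : KSub d k → ℝ) (i i' : Fin n) (hne : i ≠ i') :
    ∑ ω : Omega n d k, f (ω i) * g (ω i')
      = (d.choose k : ℝ) ^ (n - 2) * (∑ S : KSub d k, f S) * (∑ S : KSub d k, g S) := by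
  classical
  set F : Fin n → KSub d k → ℝ :=
    fun x => if x = i then f else if x = i' then g else fun _ => 1 with hF
  have hi' : i' ∈ (univ : Finset (Fin n)).erase i := by
    simp [Finset.mem_erase, Ne.symm hne]
  have h1 : ∑ ω : Omega n d k, f (ω i) * g (ω i')
      = ∑ ω : Omega n d k, ∏ x, F x (ω x) := by
    refine Finset.sum_congr rfl fun ω _ => ?_
    rw [← Finset.mul_prod_erase univ _ (mem_univ i),
      ← Finset.mul_prod_erase _ _ hi',
      Finset.prod_eq_one (fun x hx => by
        have hx1 := Finset.ne_of_mem_erase hx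
        have hx2 := Finset.ne_of_mem_erase (Finset.mem_of_mem_erase hx)
        simp [hF, hx1, hx2])]
    simp [hF, Ne.symm hne]
  rw [h1, ← Fintype.prod_sum F,
    ← Finset.mul_prod_erase univ _ (mem_univ i),
    ← Finset.mul_prod_erase _ _ hi',
    Finset.prod_eq_pow_card (b := (d.choose k : ℝ))
      (fun x hx => by
        have hx1 := Finset.ne_of_mem_erase hx
        have hx2 := Finset.ne_of_mem_erase (Finset.mem_of_mem_erase hx)
        simp [hF, hx1, hx2, Finset.card_univ, card_KSub]),
    Finset.card_erase_of_mem hi', Finset.card_erase_of_mem (mem_univ i),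
    Finset.card_univ, Fintype.card_fin]
  simp [hF, Ne.symm hne]
  ring
  have : n - 1 - 1 = n - 2 := by omega
  rw [this]

/-- one-step descent identity for the quadratic case study:
with `∇Fᵢ(w) = w − eᵢ`, `w* = (1/n)Σᵢ eᵢ`, `α = (1/n)(d/k − 1)`,
`x̂` the Rand-k-Temporal estimate of `(1/n)Σᵢ ∇Fᵢ(w)` with memories `bᵢ`, and
`w⁺ = w − η x̂`:
`E[‖w⁺ − w*‖²] = (1−η)²‖w − w*‖² + η² α (1/n) Σᵢ ‖∇Fᵢ(w) − bᵢ‖²`. -/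
theorem one_step_descent (n d k : ℕ) (hn : 1 ≤ n) (hk : 1 ≤ k) (hkd : k ≤ d)
    (e b : Fin n → Fin d → ℝ) (w : Fin d → ℝ) (η : ℝ)
    (wstar : Fin d → ℝ) (hws : wstar = fun j => (1 / (n : ℝ)) * ∑ i : Fin n, e i j)
    (α : ℝ) (hα : α = (1 / (n : ℝ)) * ((d : ℝ) / (k : ℝ) - 1)) :
    Exp (fun ω : Omega n d k =>
        ∑ j : Fin d,
          ((w j - η * ((1 / (n : ℝ)) * ∑ i : Fin n,
              fill (fun i j => w j - e i j) b ω i j)) - wstar j) ^ 2)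
      = (1 - η) ^ 2 * ∑ j : Fin d, (w j - wstar j) ^ 2
        + η ^ 2 * α * ((1 / (n : ℝ)) * ∑ i : Fin n, ∑ j : Fin d,
            ((w j - e i j) - b i j) ^ 2) := by
  classical
  have hn0 : (n : ℝ) ≠ 0 := Nat.cast_ne_zero.mpr (by omega)
  have hC0 : ((d.choose k : ℕ) : ℝ) ≠ 0 := Nat.cast_ne_zero.mpr (Nat.choose_pos hkd).ne'
  set C : ℝ := ((d.choose k : ℕ) : ℝ) with hCdef
  set u : Fin n → Fin d → ℝ := fun i j => (w j - e i j) - b i j with hu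
  set T : Fin d → Omega n d k → ℝ := fun j ω => ∑ i, u i j * gfun d k j (ω i) with hT
  have cardΩ : ((Fintype.card (Omega n d k) : ℕ) : ℝ) = C ^ n := by
    rw [hCdef]
    norm_cast
    rw [Fintype.card_fun, card_KSub, Fintype.card_fin]
  have hfill : ∀ (ω : Omega n d k) (i : Fin n) (j : Fin d),
      fill (fun i j => w j - e i j) b ω i j
        = (w j - e i j) + u i j * gfun d k j (ω i) := by
    intro ω i j
    unfold fill gfun
    by_cases hj : j ∈ (ω i).1 <;> simp [hj, hu] <;> ring
  have hpt : ∀ ω : Omega n d k,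
      (∑ j : Fin d, ((w j - η * ((1/(n:ℝ)) * ∑ i : Fin n,
          fill (fun i j => w j - e i j) b ω i j)) - wstar j) ^ 2)
      = ∑ j : Fin d, ((1-η)^2 * (w j - wstar j)^2
          - (2*(1-η)*η/n) * ((w j - wstar j) * T j ω)
          + (η/n)^2 * (T j ω)^2) := by
    intro ω
    refine Finset.sum_congr rfl fun j _ => ?_
    have h1 : ∑ i : Fin n, fill (fun i j => w j - e i j) b ω i j
        = ((n : ℝ) * w j - ∑ i : Fin n, e i j) + T j ω := by
      rw [Finset.sum_congr rfl fun i _ => hfill ω i j, Finset.sum_add_distrib]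
      simp [hT, Finset.sum_sub_distrib, Finset.card_univ]
    rw [h1, hws]
    field_simp
    ring
  have hdiag : ∀ (j : Fin d) (i : Fin n),
      ∑ ω : Omega n d k, gfun d k j (ω i) * gfun d k j (ω i)
        = ((d:ℝ)/(k:ℝ) - 1) * C ^ n := by
    intro j i
    rw [sum_pi_one (n := n) (fun S => gfun d k j S * gfun d k j S) i]
    have h2 : ∑ S : KSub d k, gfun d k j S * gfun d k j S = ((d:ℝ)/(k:ℝ) - 1) * C := by
      simpa [pow_two] using sum_gfun_sq d k hk hkd j
    have h3 : C ^ (n-1) * C = C ^ n := by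
      rw [← pow_succ]; congr 1; omega
    rw [h2, show C ^ (n-1) * (((d:ℝ)/(k:ℝ) - 1) * C)
      = ((d:ℝ)/(k:ℝ) - 1) * (C ^ (n-1) * C) by ring, h3]
  have hoff : ∀ (j : Fin d) (i i' : Fin n), i ≠ i' →
      ∑ ω : Omega n d k, gfun d k j (ω i) * gfun d k j (ω i') = 0 := by
    intro j i i' hne
    rw [sum_pi_two (gfun d k j) (gfun d k j) i i' hne, sum_gfun d k hk hkd j]
    ring
  have hTzero : ∀ j : Fin d, ∑ ω : Omega n d k, T j ω = 0 := by
    intro j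
    simp only [hT]
    rw [Finset.sum_comm]
    refine Finset.sum_eq_zero fun i _ => ?_
    rw [← Finset.mul_sum, sum_pi_one (n := n) (gfun d k j) i, sum_gfun d k hk hkd j]
    ring
  have hTsq : ∀ j : Fin d, ∑ ω : Omega n d k, (T j ω)^2
      = ((d:ℝ)/(k:ℝ) - 1) * C ^ n * ∑ i : Fin n, (u i j)^2 := by
    intro j
    have hexp : ∀ ω : Omega n d k, (T j ω)^2
        = ∑ i : Fin n, ∑ i' : Fin n,
            (u i j * u i' j) * (gfun d k j (ω i) * gfun d k j (ω i')) := by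
      intro ω
      simp only [hT]
      rw [pow_two, Finset.sum_mul_sum]
      exact Finset.sum_congr rfl fun i _ => Finset.sum_congr rfl fun i' _ => by ring
    rw [Finset.sum_congr rfl fun ω _ => hexp ω]
    rw [Finset.sum_comm]
    have hi : ∀ i : Fin n,
        (∑ ω : Omega n d k, ∑ i' : Fin n,
            (u i j * u i' j) * (gfun d k j (ω i) * gfun d k j (ω i')))
        = (u i j * u i j) * (((d:ℝ)/(k:ℝ) - 1) * C ^ n) := by
      intro i
      rw [Finset.sum_comm]
      have hdot : ∀ i' : Fin n,
          ∑ ω : Omega n d k, (u i j * u i' j) * (gfun d k j (ω i) * gfun d k j (ω i'))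
          = (u i j * u i' j) * ∑ ω : Omega n d k, gfun d k j (ω i) * gfun d k j (ω i') :=
        fun i' => (Finset.mul_sum _ _ _).symm
      rw [Finset.sum_congr rfl fun i' _ => hdot i']
      rw [← Finset.add_sum_erase _ _ (Finset.mem_univ i), hdiag j i,
        Finset.sum_eq_zero (fun i' hi' => by
          rw [hoff j i i' (Ne.symm (Finset.ne_of_mem_erase hi'))]; ring)]
      ring
    rw [Finset.sum_congr rfl fun i _ => hi i, ← Finset.sum_mul]
    rw [Finset.sum_congr rfl (fun i _ => (pow_two (u i j)).symm)]
    ring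
  unfold Exp
  rw [Finset.sum_congr rfl fun ω _ => hpt ω, cardΩ]
  rw [Finset.sum_comm]
  have hj : ∀ j : Fin d, ∑ ω : Omega n d k,
      ((1-η)^2 * (w j - wstar j)^2
          - (2*(1-η)*η/n) * ((w j - wstar j) * T j ω)
          + (η/n)^2 * (T j ω)^2)
      = C ^ n * ((1-η)^2 * (w j - wstar j)^2)
          + (η/n)^2 * (((d:ℝ)/(k:ℝ) - 1) * C ^ n * ∑ i : Fin n, (u i j)^2) := by
    intro j
    rw [Finset.sum_add_distrib, Finset.sum_sub_distrib, Finset.sum_const, Finset.card_univ,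
      nsmul_eq_mul, cardΩ, ← Finset.mul_sum, ← Finset.mul_sum, ← Finset.mul_sum,
      hTzero j, hTsq j]
    ring
  rw [Finset.sum_congr rfl fun j _ => hj j]
  rw [Finset.sum_add_distrib, ← Finset.mul_sum, ← Finset.mul_sum, ← Finset.mul_sum,
    ← Finset.mul_sum]
  rw [show (∑ j : Fin d, ∑ i : Fin n, (u i j)^2) = ∑ i : Fin n, ∑ j : Fin d, (u i j)^2 from
    Finset.sum_comm]
  have hCn : C ^ n ≠ 0 := pow_ne_zero _ hC0
  rw [hα]
  field_simp
  ring
end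
end

section
/- Deterministic linear-rate recursion lemma: let α ≥ 0, p ∈ (0,1], and η be a real number with 0 < η ≤ min{ 1/(1 + 8α), p/2 }. Suppose (a_t)_{t≥0} and (y_t)_{t≥0} are sequences of nonnegative reals satisfying a_{t+1} ≤ ((1−η)² + 2η²α)·a_t + 2η²α·y_t and y_{t+1} ≤ p·a_t + (1−p)·y_t for all t ≥ 0. Then a_t ≤ (1−η)^t · (a_0 + y_0) for all t ≥ 0. -/
/-!
The weighted sum `aₜ + c·yₜ` with `c = 4η²α/p` is a Lyapunov function contracting by `1 − η`
at every step: the weight is large enough that the `y`-part absorbs the `2η²α·yₜ` it feeds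
into `a`, because `c·(p − η) ≥ c·p/2 = 2η²α`, and small enough (`c ≤ 2ηα ≤ 1`) that it
neither spoils the `a`-coefficient nor the initial value.
-/

lemma weighted_sum_le_of_linear_bounds {a y a' y' A B p q c r : ℝ}
    (ha : 0 ≤ a) (hy : 0 ≤ y) (hc : 0 ≤ c)
    (ha' : a' ≤ A * a + B * y) (hy' : y' ≤ p * a + q * y)
    (hA : A + c * p ≤ r) (hB : B + c * q ≤ c * r) :
    a' + c * y' ≤ r * (a + c * y) :=
  calc a' + c * y' ≤ (A * a + B * y) + c * (p * a + q * y) :=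
        add_le_add ha' (mul_le_mul_of_nonneg_left hy' hc)
    _ = (A + c * p) * a + (B + c * q) * y := by ring
    _ ≤ r * a + c * r * y := by gcongr
    _ = r * (a + c * y) := by ring

noncomputable def lyapunovWeight (α p η : ℝ) : ℝ := 4 * η ^ 2 * α / p

section LyapunovWeight

variable {α p η : ℝ} (hα : 0 ≤ α) (hη0 : 0 < η) (hηα : η * (1 + 8 * α) ≤ 1)
  (hηp : 2 * η ≤ p)
include hα hη0 hηp

lemma lyapunovWeight_nonneg : 0 ≤ lyapunovWeight α p η :=
  div_nonneg (by positivity) (by linarith)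

lemma lyapunovWeight_le_two_mul_mul : lyapunovWeight α p η ≤ 2 * η * α := by
  rw [lyapunovWeight, div_le_iff₀ (by linarith)]
  nlinarith [mul_nonneg hη0.le hα]

include hηα in
lemma lyapunovWeight_le_one : lyapunovWeight α p η ≤ 1 := by
  nlinarith [lyapunovWeight_le_two_mul_mul hα hη0 hηp]

include hηα in
lemma lyapunovWeight_coeff_a_le :
    (1 - η) ^ 2 + 2 * η ^ 2 * α + lyapunovWeight α p η * p ≤ 1 - η := by
  rw [lyapunovWeight, div_mul_cancel₀ _ (by linarith)]
  nlinarith [mul_nonneg hη0.le (mul_nonneg hη0.le hα)]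

lemma lyapunovWeight_coeff_y_le :
    2 * η ^ 2 * α + lyapunovWeight α p η * (1 - p) ≤ lyapunovWeight α p η * (1 - η) := by
  have absorb : 2 * η ^ 2 * α ≤ lyapunovWeight α p η * (p - η) := by
    rw [lyapunovWeight, div_mul_eq_mul_div, le_div_iff₀ (by linarith)]
    nlinarith [mul_nonneg (sq_nonneg η) hα]
  linarith

end LyapunovWeight

theorem linear_rate_recursion_general (α p η : ℝ) (hα : 0 ≤ α)
    (hη0 : 0 < η) (hη : η ≤ min (1 / (1 + 8 * α)) (p / 2))
    (a y : ℕ → ℝ) (ha : ∀ t, 0 ≤ a t) (hy : ∀ t, 0 ≤ y t)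
    (hrec_a : ∀ t, a (t + 1) ≤ ((1 - η) ^ 2 + 2 * η ^ 2 * α) * a t
        + 2 * η ^ 2 * α * y t)
    (hrec_y : ∀ t, y (t + 1) ≤ p * a t + (1 - p) * y t) :
    ∀ t, a t ≤ (1 - η) ^ t * (a 0 + y 0) := by
  obtain ⟨hηα, hηp⟩ := le_min_iff.mp hη
  replace hηα : η * (1 + 8 * α) ≤ 1 := (le_div_iff₀ (by positivity)).mp (by simpa using hηα)
  replace hηp : 2 * η ≤ p := by linarith
  have hη1 : 0 ≤ 1 - η := by nlinarith [mul_nonneg hη0.le hα]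
  set c := lyapunovWeight α p η
  have hc0 : 0 ≤ c := lyapunovWeight_nonneg hα hη0 hηp
  have contract : ∀ t, a (t + 1) + c * y (t + 1) ≤ (1 - η) * (a t + c * y t) := fun t =>
    weighted_sum_le_of_linear_bounds (ha t) (hy t) hc0 (hrec_a t) (hrec_y t)
      (lyapunovWeight_coeff_a_le hα hη0 hηα hηp) (lyapunovWeight_coeff_y_le hα hη0 hηp)
  intro t
  calc a t ≤ a t + c * y t := le_add_of_nonneg_right (mul_nonneg hc0 (hy t))
    _ ≤ (1 - η) ^ t * (a 0 + c * y 0) :=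
        le_geom (u := fun t => a t + c * y t) hη1 t fun k _ => contract k
    _ ≤ (1 - η) ^ t * (a 0 + y 0) := by
        have : c * y 0 ≤ y 0 :=
          mul_le_of_le_one_left (hy 0) (lyapunovWeight_le_one hα hη0 hηα hηp)
        gcongr

/-- deterministic linear-rate recursion lemma:
if `α ≥ 0`, `p ∈ (0,1]`, `0 < η ≤ min{1/(1+8α), p/2}`, and the nonnegative
sequences `(aₜ)`, `(yₜ)` satisfy
`a_{t+1} ≤ ((1−η)² + 2η²α)·aₜ + 2η²α·yₜ` and `y_{t+1} ≤ p·aₜ + (1−p)·yₜ`,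
then `aₜ ≤ (1−η)ᵗ·(a₀ + y₀)` for all `t`. -/
theorem linear_rate_recursion (α p η : ℝ) (hα : 0 ≤ α) (hp0 : 0 < p) (hp1 : p ≤ 1)
    (hη0 : 0 < η) (hη : η ≤ min (1 / (1 + 8 * α)) (p / 2))
    (a y : ℕ → ℝ) (ha : ∀ t, 0 ≤ a t) (hy : ∀ t, 0 ≤ y t)
    (hrec_a : ∀ t, a (t + 1) ≤ ((1 - η) ^ 2 + 2 * η ^ 2 * α) * a t
        + 2 * η ^ 2 * α * y t)
    (hrec_y : ∀ t, y (t + 1) ≤ p * a t + (1 - p) * y t) :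
    ∀ t, a t ≤ (1 - η) ^ t * (a 0 + y 0) :=
  linear_rate_recursion_general α p η hα hη0 hη a y ha hy hrec_a hrec_y
end

section
/- If the data vectors are pairwise uncorrelated in the sense that R2 = 2·Σ_{1≤i<l≤n} ⟨x_i, x_l⟩ = 0 (for example, if the x_i are pairwise orthogonal), and n ≥ 2, 1 ≤ k < d, and R1 = Σ_i ||x_i||² > 0, then the constant scaling function T ≡ 1 — which recovers the standard Rand-k estimator x̂ = (1/n)·(d/k)·Σ_i h_i — minimizes the mean squared error within the Rand-k-Spatial family: for every T : {1,…,n} → (0,∞), E[||x̂^{T≡1} − x̄||²] ≤ E[||x̂^{T} − x̄||²]. -/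
open Finset

noncomputable section

/-!
Fix a coordinate `j`. The estimate of `x̄ⱼ` is `∑ᵢ aᵢ xᵢⱼ`, where the random weight `aᵢ` is
`β̄ / (n T(Mⱼ))` if node `i` sends `j` and `0` otherwise. Each node sends `j` independently with
probability `p = k/d`, so `E[f(Mⱼ); t ⊆ Sⱼ]` (with `Sⱼ` the set of senders) is a binomial sum
depending on the set `t` of nodes only through `|t|`. With `t = {i}` this shows that `β̄` is exactly
the normalisation making every weight unbiased, `E[aᵢ] = 1/n`; with `t = {i, l}` it shows that
`κ = E[aᵢ aₗ]` (`i ≠ l`) is the same for all pairs and coordinates. Hence the MSE equals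
`∑ⱼ ∑ᵢ E[aᵢ²] xᵢⱼ² + κ R₂ − ∑ⱼ x̄ⱼ²`, and for `R₂ = 0` only the diagonal moments `E[aᵢ²]` depend
on `T`. For `T ≡ 1` the weight `aᵢ¹` is `1/(np)` times the indicator that `i` sends `j`, so
`E[aᵢᵀ aᵢ¹] = E[aᵢᵀ]/(np)` does not depend on `T`, and
`E[(aᵢᵀ)²] − E[(aᵢ¹)²] = E[(aᵢᵀ − aᵢ¹)²] ≥ 0`.
-/

open scoped BigOperators

section FiniteSums

variable {ι : Type*} [Fintype ι] [DecidableEq ι]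

theorem sum_ite_subset_apply_card {M : Type*} [AddCommMonoid M] (t : Finset ι) (f : ℕ → M) :
    ∑ s : Finset ι, (if t ⊆ s then f #s else 0)
      = ∑ m ∈ range (Fintype.card ι - #t + 1), (Fintype.card ι - #t).choose m • f (m + #t) := by
  have hdisj : ∀ u ∈ (univ \ t).powerset, Disjoint t u := fun u hu =>
    disjoint_of_subset_right (mem_powerset.1 hu) disjoint_sdiff
  have hIcc : univ.filter (t ⊆ ·) = Icc t univ := by ext; simp
  rw [← sum_filter, hIcc, Icc_eq_image_powerset (subset_univ t), sum_image fun u hu v hv huv => by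
    rw [← union_sdiff_cancel_left (hdisj u hu), huv, union_sdiff_cancel_left (hdisj v hv)]]
  rw [← card_compl, ← sum_powerset_apply_card (fun m => f (m + #t)), compl_eq_univ_sdiff]
  exact sum_congr rfl fun u hu => by rw [card_union_of_disjoint (hdisj u hu), add_comm]

theorem sum_pi_apply_filter {α R : Type*} [Fintype α] [CommSemiring R] (P : α → Prop)
    [DecidablePred P] (F : Finset ι → R) :
    ∑ ω : ι → α, F (univ.filter fun i => P (ω i))
      = ∑ s, (#(univ.filter P) ^ #s * #(univ.filter fun a => ¬ P a) ^ #sᶜ : ℕ) * F s := by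
  rw [← sum_fiberwise univ (fun ω : ι → α => univ.filter fun i => P (ω i))]
  refine sum_congr rfl fun s _ => ?_
  have hfiber : (univ.filter fun ω : ι → α => (univ.filter fun i => P (ω i)) = s)
      = Fintype.piFinset fun i => if i ∈ s then univ.filter P else univ.filter fun a => ¬ P a := by
    ext ω
    simp only [mem_filter, mem_univ, true_and, Fintype.mem_piFinset, Finset.ext_iff]
    refine forall_congr' fun i => ?_
    by_cases hi : i ∈ s <;> simp [hi]
  rw [sum_congr rfl fun ω hω => by rw [(mem_filter.1 hω).2], sum_const, hfiber,
    Fintype.card_piFinset]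
  simp only [apply_ite card]
  rw [prod_ite, prod_const, prod_const, nsmul_eq_mul]
  simp [compl_eq_univ_sdiff, filter_not]

lemma sum_sum_mul_eq_of_offDiag_eq {R : Type*} [CommSemiring R] (E : ι → ι → R) {κ : R}
    (hE : ∀ i l, i ≠ l → E i l = κ) (y : ι → R) :
    ∑ i, ∑ l, E i l * (y i * y l)
      = ∑ i, E i i * y i ^ 2 + κ * ∑ i, ∑ l, if i ≠ l then y i * y l else 0 := by
  have hsplit : ∀ i l, E i l * (y i * y l)
      = (if i = l then E i i * y i ^ 2 else 0) + κ * (if i ≠ l then y i * y l else 0) := by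
    intro i l
    by_cases hil : i = l
    · subst hil; simp [sq]
    · simp [hil, hE i l hil]
  simp only [hsplit, sum_add_distrib, sum_ite_eq, mem_univ, if_true, ← mul_sum]

end FiniteSums

lemma sum_ite_ne_eq_two_mul_sum_ite_lt {ι R : Type*} [Fintype ι] [LinearOrder ι]
    [NonAssocSemiring R] (g : ι → ι → R) (hg : ∀ i l, g i l = g l i) :
    ∑ i, ∑ l, (if i ≠ l then g i l else 0) = 2 * ∑ i, ∑ l, if i < l then g i l else 0 := by
  have hsplit : ∀ i l, (if i ≠ l then g i l else 0)
      = (if i < l then g i l else 0) + (if l < i then g l i else 0) := by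
    intro i l
    rcases lt_trichotomy i l with h | rfl | h
    · simp [h, h.ne, lt_asymm h]
    · simp
    · simp [h, h.ne', lt_asymm h, hg i l]
  simp only [hsplit, sum_add_distrib]
  rw [sum_comm (f := fun i l => if l < i then g l i else 0), two_mul]

section RandK

variable {n d k : ℕ}

lemma pr_pos (hk : 1 ≤ k) (hkd : k < d) : 0 < pr d k :=
  div_pos (by exact_mod_cast hk) (Nat.cast_pos.2 (by omega))

lemma pr_lt_one (hkd : k < d) : pr d k < 1 :=
  (div_lt_one (Nat.cast_pos.2 (by omega))).2 (by exact_mod_cast hkd)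

lemma card_KSub_filter_mem (hk : 1 ≤ k) (j : Fin d) :
    #{S : KSub d k | j ∈ S.1} = (d - 1).choose (k - 1) := by
  have h := card_filter_powersetCard_subset {j} (univ : Finset (Fin d)) k
    (subset_univ _) (by simpa using hk)
  rw [card_singleton, card_univ, Fintype.card_fin] at h
  rw [← h, ← card_map (Function.Embedding.subtype _)]
  congr 1
  ext S
  simp [and_comm]

lemma choose_pred_eq_pr_mul_choose (hk : 1 ≤ k) (hkd : k ≤ d) :
    ((d - 1).choose (k - 1) : ℝ) = pr d k * d.choose k := by
  have h := Nat.add_one_mul_choose_eq (d - 1) (k - 1)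
  rw [Nat.sub_add_cancel (hk.trans hkd), Nat.sub_add_cancel hk] at h
  have hd : (d : ℝ) ≠ 0 := by norm_cast; omega
  rw [pr, div_mul_eq_mul_div, eq_div_iff hd, mul_comm (k : ℝ)]
  exact_mod_cast (mul_comm _ _).trans h

lemma card_KSub_filter_notMem (hk : 1 ≤ k) (hkd : k ≤ d) (j : Fin d) :
    (#{S : KSub d k | j ∉ S.1} : ℝ) = (1 - pr d k) * d.choose k := by
  have h := card_filter_add_card_filter_not (s := (univ : Finset (KSub d k))) (j ∈ ·.1)
  rw [card_univ, Fintype.card_finset_len, Fintype.card_fin, card_KSub_filter_mem hk] at h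
  have h' : ((d - 1).choose (k - 1) + #{S : KSub d k | j ∉ S.1} : ℝ) = d.choose k := by
    exact_mod_cast h
  rw [choose_pred_eq_pr_mul_choose hk hkd] at h'
  linarith

lemma card_Omega : Fintype.card (Omega n d k) = d.choose k ^ n := by
  rw [Fintype.card_fun, Fintype.card_finset_len, Fintype.card_fin, Fintype.card_fin]

def senders (ω : Omega n d k) (j : Fin d) : Finset (Fin n) := {i | j ∈ (ω i).1}

lemma exp_apply_senders (hk : 1 ≤ k) (hkd : k ≤ d) (j : Fin d) (F : Finset (Fin n) → ℝ) :
    Exp (fun ω : Omega n d k => F (senders ω j))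
      = ∑ s, pr d k ^ #s * (1 - pr d k) ^ #sᶜ * F s := by
  have hN : (0 : ℝ) < d.choose k := by exact_mod_cast Nat.choose_pos hkd
  simp only [Exp, senders]
  rw [sum_pi_apply_filter (ι := Fin n) (fun S : KSub d k => j ∈ S.1), card_Omega, sum_div]
  refine sum_congr rfl fun s _ => ?_
  have hsplit : (d.choose k : ℝ) ^ n = (d.choose k : ℝ) ^ #s * (d.choose k : ℝ) ^ #sᶜ := by
    rw [← pow_add, card_add_card_compl, Fintype.card_fin]
  rw [Nat.cast_pow, hsplit, Nat.cast_mul, Nat.cast_pow, Nat.cast_pow, card_KSub_filter_mem hk,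
    choose_pred_eq_pr_mul_choose hk hkd, card_KSub_filter_notMem hk hkd, mul_pow, mul_pow,
    div_eq_iff (by positivity)]
  ring

/-- `E[f(Mⱼ); t ⊆ Sⱼ]` for any set `t` of `r` nodes: on that event `Mⱼ - r` counts the senders
among the other `n - r` nodes, a binomial variable. -/
def senderMoment (n r : ℕ) (p : ℝ) (f : ℕ → ℝ) : ℝ :=
  ∑ m ∈ range (n - r + 1),
    ((n - r).choose m : ℝ) * (p ^ (m + r) * (1 - p) ^ (n - (m + r)) * f (m + r))

lemma exp_ite_subset_senders (hk : 1 ≤ k) (hkd : k ≤ d) (j : Fin d) (t : Finset (Fin n))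
    (f : ℕ → ℝ) :
    Exp (fun ω : Omega n d k => if t ⊆ senders ω j then f (Mcount ω j) else 0)
      = senderMoment n #t (pr d k) f := by
  refine (exp_apply_senders hk hkd j fun s => if t ⊆ s then f #s else 0).trans ?_
  simp only [mul_ite, mul_zero, card_compl, Fintype.card_fin]
  rw [sum_ite_subset_apply_card t (fun m => pr d k ^ m * (1 - pr d k) ^ (n - m) * f m),
    Fintype.card_fin, senderMoment]
  simp only [nsmul_eq_mul]

lemma senderMoment_const_mul (n r : ℕ) (p c : ℝ) (f : ℕ → ℝ) :
    senderMoment n r p (fun m => c * f m) = c * senderMoment n r p f := by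
  rw [senderMoment, senderMoment, mul_sum]
  exact sum_congr rfl fun m _ => by ring

lemma senderMoment_one_const (n : ℕ) (p c : ℝ) : senderMoment n 1 p (fun _ => c) = p * c := by
  have h : ∑ m ∈ range (n - 1 + 1), p ^ m * (1 - p) ^ (n - 1 - m) * (n - 1).choose m = 1 := by
    rw [← add_pow, add_sub_cancel, one_pow]
  conv_rhs => rw [← mul_one (p * c), ← h, mul_sum]
  rw [senderMoment]
  refine sum_congr rfl fun m _ => ?_
  rw [show n - (m + 1) = n - 1 - m by omega, pow_succ]
  ring

lemma senderMoment_pos {n r : ℕ} {p : ℝ} {f : ℕ → ℝ} (hp₀ : 0 < p) (hp₁ : p < 1) (hr : r ≤ n)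
    (hf : ∀ m ∈ Icc r n, 0 < f m) : 0 < senderMoment n r p f := by
  refine sum_pos (fun m hm => ?_) nonempty_range_add_one
  have hm' := mem_range.1 hm
  have hfm := hf (m + r) (mem_Icc.2 ⟨by omega, by omega⟩)
  have hq : 0 < 1 - p := by linarith
  have hchoose : (0 : ℝ) < (n - r).choose m := by exact_mod_cast Nat.choose_pos (by omega)
  positivity

lemma inv_betaBar (hn : 1 ≤ n) (T : ℕ → ℝ) :
    (betaBar n d k T)⁻¹ = senderMoment n 1 (pr d k) (fun m => (T m)⁻¹) := by
  rw [betaBar, inv_inv, senderMoment, Nat.sub_add_cancel hn, range_eq_Ico,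
    ← Ico_add_one_right_eq_Icc, ← zero_add 1, ← sum_Ico_add']
  refine sum_congr rfl fun m _ => ?_
  rw [Nat.add_sub_cancel, pow_succ]
  ring

lemma betaBar_one (hn : 1 ≤ n) : betaBar n d k (fun _ => 1) = (pr d k)⁻¹ := by
  rw [← inv_inv (betaBar n d k _), inv_betaBar hn]
  simp only [inv_one, senderMoment_one_const, mul_one]

lemma exp_eq_expect (f : Omega n d k → ℝ) : Exp f = 𝔼 ω, f ω :=
  (Fintype.expect_eq_sum_div_card f).symm

lemma exp_sub_sq_of_exp_eq (hkd : k ≤ d) {f : Omega n d k → ℝ} {c : ℝ} (hf : Exp f = c) :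
    Exp (fun ω => (f ω - c) ^ 2) = Exp (fun ω => f ω ^ 2) - c ^ 2 := by
  have : Nonempty (Omega n d k) := Fintype.card_pos_iff.1 (by
    rw [card_Omega]; exact pow_pos (Nat.choose_pos hkd) n)
  simp only [exp_eq_expect] at hf ⊢
  simp only [sub_sq, expect_add_distrib, expect_sub_distrib, ← mul_expect, ← expect_mul,
    Fintype.expect_const, hf]
  ring

def nodeWeight (T : ℕ → ℝ) (ω : Omega n d k) (j : Fin d) (i : Fin n) : ℝ :=
  if j ∈ (ω i).1 then 1 / (n : ℝ) * (betaBar n d k T / T (Mcount ω j)) else 0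

lemma spatialEst_eq_sum_nodeWeight (x : Fin n → Fin d → ℝ) (T : ℕ → ℝ) (ω : Omega n d k)
    (j : Fin d) : spatialEst x T ω j = ∑ i, nodeWeight T ω j i * x i j := by
  unfold spatialEst spars nodeWeight
  split_ifs with hM
  · rw [mul_sum]
    exact sum_congr rfl fun i _ => by split_ifs <;> simp
  · have hj : ∀ i, j ∉ (ω i).1 := by simpa [Mcount, filter_eq_empty_iff] using hM
    simp [hj]

lemma nodeWeight_eq_ite_subset (T : ℕ → ℝ) (ω : Omega n d k) (j : Fin d) (i : Fin n) :
    nodeWeight T ω j i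
      = if {i} ⊆ senders ω j then 1 / n * betaBar n d k T * (T (Mcount ω j))⁻¹ else 0 := by
  simp [nodeWeight, senders, div_eq_mul_inv, mul_assoc]

lemma nodeWeight_mul_nodeWeight (T : ℕ → ℝ) (ω : Omega n d k) (j : Fin d) (i l : Fin n) :
    nodeWeight T ω j i * nodeWeight T ω j l
      = if {i, l} ⊆ senders ω j then (1 / n * betaBar n d k T * (T (Mcount ω j))⁻¹) ^ 2 else 0 := by
  simp only [nodeWeight_eq_ite_subset, singleton_subset_iff, insert_subset_iff]
  split_ifs <;> simp_all [sq]

lemma nodeWeight_mul_nodeWeight_one (hn : 1 ≤ n) (T : ℕ → ℝ) (ω : Omega n d k) (j : Fin d)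
    (i : Fin n) :
    nodeWeight T ω j i * nodeWeight (fun _ => 1) ω j i = nodeWeight T ω j i * (n * pr d k)⁻¹ := by
  unfold nodeWeight
  rw [betaBar_one hn]
  split_ifs <;> simp [mul_comm]

lemma exp_nodeWeight (hk : 1 ≤ k) (hkd : k < d) {T : ℕ → ℝ} (hT : ∀ m ∈ Icc 1 n, 0 < T m)
    (j : Fin d) (i : Fin n) : Exp (fun ω : Omega n d k => nodeWeight T ω j i) = 1 / n := by
  have hn : 1 ≤ n := i.pos
  have hβ : betaBar n d k T ≠ 0 := fun h =>
    (senderMoment_pos (pr_pos hk hkd) (pr_lt_one hkd) hn fun m hm => inv_pos.2 (hT m hm)).ne'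
      (by rw [← inv_betaBar hn, h, inv_zero])
  simp_rw [nodeWeight_eq_ite_subset]
  rw [exp_ite_subset_senders hk hkd.le j {i} fun m => 1 / n * betaBar n d k T * (T m)⁻¹,
    card_singleton, senderMoment_const_mul, ← inv_betaBar hn, mul_assoc,
    mul_inv_cancel₀ hβ, mul_one]

lemma exp_nodeWeight_mul_nodeWeight_one (hk : 1 ≤ k) (hkd : k < d) {T : ℕ → ℝ}
    (hT : ∀ m ∈ Icc 1 n, 0 < T m) (j : Fin d) (i : Fin n) :
    Exp (fun ω : Omega n d k => nodeWeight T ω j i * nodeWeight (fun _ => 1) ω j i)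
      = 1 / n * (n * pr d k)⁻¹ := by
  simp_rw [nodeWeight_mul_nodeWeight_one i.pos]
  rw [exp_eq_expect, ← expect_mul, ← exp_eq_expect, exp_nodeWeight hk hkd hT]

lemma exp_nodeWeight_one_sq_le (hk : 1 ≤ k) (hkd : k < d) {T : ℕ → ℝ}
    (hT : ∀ m ∈ Icc 1 n, 0 < T m) (j : Fin d) (i : Fin n) :
    Exp (fun ω : Omega n d k => nodeWeight (fun _ => 1) ω j i ^ 2)
      ≤ Exp (fun ω : Omega n d k => nodeWeight T ω j i ^ 2) := by
  have hT1 := exp_nodeWeight_mul_nodeWeight_one hk hkd hT j i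
  have h11 := exp_nodeWeight_mul_nodeWeight_one hk hkd (T := fun _ => 1) (fun _ _ => one_pos) j i
  have hdiff : 0 ≤ Exp (fun ω : Omega n d k =>
      (nodeWeight T ω j i - nodeWeight (fun _ => 1) ω j i) ^ 2) := by
    rw [exp_eq_expect]
    exact expect_nonneg fun _ _ => sq_nonneg _
  simp only [exp_eq_expect, sub_sq, expect_add_distrib, expect_sub_distrib, mul_assoc,
    ← mul_expect] at hT1 h11 hdiff ⊢
  simp only [← sq] at h11
  linarith

lemma exp_nodeWeight_mul_of_ne (hk : 1 ≤ k) (hkd : k ≤ d) (T : ℕ → ℝ) (j : Fin d) {i l : Fin n}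
    (hil : i ≠ l) :
    Exp (fun ω : Omega n d k => nodeWeight T ω j i * nodeWeight T ω j l)
      = senderMoment n 2 (pr d k) (fun m => (1 / n * betaBar n d k T * (T m)⁻¹) ^ 2) := by
  simp_rw [nodeWeight_mul_nodeWeight]
  rw [exp_ite_subset_senders hk hkd j {i, l} fun m => (1 / n * betaBar n d k T * (T m)⁻¹) ^ 2,
    card_pair hil]

lemma exp_sum_nodeWeight_mul (hk : 1 ≤ k) (hkd : k < d) {T : ℕ → ℝ}
    (hT : ∀ m ∈ Icc 1 n, 0 < T m) (j : Fin d) (y : Fin n → ℝ) :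
    Exp (fun ω : Omega n d k => ∑ i, nodeWeight T ω j i * y i) = 1 / n * ∑ i, y i := by
  rw [exp_eq_expect, expect_sum_comm, mul_sum]
  refine sum_congr rfl fun i _ => ?_
  rw [← expect_mul, ← exp_eq_expect, exp_nodeWeight hk hkd hT]

lemma exp_sq_sum_nodeWeight_mul (hk : 1 ≤ k) (hkd : k ≤ d) (T : ℕ → ℝ) (j : Fin d)
    (y : Fin n → ℝ) :
    Exp (fun ω : Omega n d k => (∑ i, nodeWeight T ω j i * y i) ^ 2)
      = ∑ i, Exp (fun ω : Omega n d k => nodeWeight T ω j i ^ 2) * y i ^ 2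
        + senderMoment n 2 (pr d k) (fun m => (1 / n * betaBar n d k T * (T m)⁻¹) ^ 2)
          * ∑ i, ∑ l, if i ≠ l then y i * y l else 0 := by
  have hexpand : Exp (fun ω : Omega n d k => (∑ i, nodeWeight T ω j i * y i) ^ 2)
      = ∑ i, ∑ l, Exp (fun ω : Omega n d k => nodeWeight T ω j i * nodeWeight T ω j l)
          * (y i * y l) := by
    simp only [exp_eq_expect, sq, sum_mul_sum, expect_sum_comm, expect_mul]
    exact sum_congr rfl fun i _ => sum_congr rfl fun l _ => expect_congr rfl fun ω _ => by ring
  rw [hexpand,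
    sum_sum_mul_eq_of_offDiag_eq _ fun i l hil => exp_nodeWeight_mul_of_ne hk hkd T j hil]
  simp only [sq]

lemma mseSpatial_eq (hk : 1 ≤ k) (hkd : k < d) (x : Fin n → Fin d → ℝ) {T : ℕ → ℝ}
    (hT : ∀ m ∈ Icc 1 n, 0 < T m) :
    mseSpatial n d k x T
      = ∑ j, ∑ i, Exp (fun ω : Omega n d k => nodeWeight T ω j i ^ 2) * x i j ^ 2
        + senderMoment n 2 (pr d k) (fun m => (1 / n * betaBar n d k T * (T m)⁻¹) ^ 2)
          * ∑ j, ∑ i, ∑ l, (if i ≠ l then x i j * x l j else 0)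
        - ∑ j, (1 / n * ∑ i, x i j) ^ 2 := by
  have hcoord : ∀ j, Exp (fun ω : Omega n d k => (spatialEst x T ω j - 1 / n * ∑ i, x i j) ^ 2)
      = ∑ i, Exp (fun ω : Omega n d k => nodeWeight T ω j i ^ 2) * x i j ^ 2
        + senderMoment n 2 (pr d k) (fun m => (1 / n * betaBar n d k T * (T m)⁻¹) ^ 2)
          * ∑ i, ∑ l, (if i ≠ l then x i j * x l j else 0)
        - (1 / n * ∑ i, x i j) ^ 2 := by
    intro j
    simp_rw [spatialEst_eq_sum_nodeWeight]
    rw [exp_sub_sq_of_exp_eq hkd.le (exp_sum_nodeWeight_mul hk hkd hT j _),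
      exp_sq_sum_nodeWeight_mul hk hkd.le T j]
  rw [mseSpatial, exp_eq_expect, expect_sum_comm]
  simp only [← exp_eq_expect]
  rw [sum_congr rfl fun j _ => hcoord j, sum_sub_distrib, sum_add_distrib, ← mul_sum]

end RandK

theorem randk_optimal_when_uncorrelated_general (n d k : ℕ) (hk : 1 ≤ k)
    (hkd : k < d) (x : Fin n → Fin d → ℝ)
    (hR2 : (2 : ℝ) * ∑ i : Fin n, ∑ l : Fin n,
        (if i < l then ∑ j : Fin d, x i j * x l j else 0) = 0) :
    ∀ T : ℕ → ℝ, (∀ m ∈ Finset.Icc 1 n, 0 < T m) →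
      mseSpatial n d k x (fun _ => 1) ≤ mseSpatial n d k x T := by
  intro T hT
  have hcross : ∑ j, ∑ i, ∑ l, (if i ≠ l then x i j * x l j else 0) = 0 := by
    rw [sum_comm]
    simp only [fun i => sum_comm (s := (univ : Finset (Fin d))) (t := (univ : Finset (Fin n)))
      (f := fun j l => if i ≠ l then x i j * x l j else 0), ← ite_sum_zero]
    rw [sum_ite_ne_eq_two_mul_sum_ite_lt _ fun i l => sum_congr rfl fun j _ => mul_comm _ _, hR2]
  rw [mseSpatial_eq hk hkd x hT, mseSpatial_eq hk hkd x fun _ _ => one_pos, hcross, mul_zero,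
    mul_zero]
  gcongr with j _ i _
  exact exp_nodeWeight_one_sq_le hk hkd hT j i

/-- Rand-k is optimal when the data is uncorrelated:
if `R₂ = 2 Σ_{i<l} ⟨xᵢ, xₗ⟩ = 0`, `n ≥ 2`, `1 ≤ k < d` and `R₁ > 0`, then the
constant scaling function `T ≡ 1` (the standard Rand-k estimator) minimizes
the MSE within the Rand-k-Spatial family. -/
theorem randk_optimal_when_uncorrelated (n d k : ℕ) (hn : 2 ≤ n) (hk : 1 ≤ k)
    (hkd : k < d) (x : Fin n → Fin d → ℝ)
    (hR2 : (2 : ℝ) * ∑ i : Fin n, ∑ l : Fin n,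
        (if i < l then ∑ j : Fin d, x i j * x l j else 0) = 0)
    (hR1 : 0 < ∑ i : Fin n, ∑ j : Fin d, x i j ^ 2) :
    ∀ T : ℕ → ℝ, (∀ m ∈ Finset.Icc 1 n, 0 < T m) →
      mseSpatial n d k x (fun _ => 1) ≤ mseSpatial n d k x T :=
  randk_optimal_when_uncorrelated_general n d k hk hkd x hR2
end
end

section
/- If all data vectors are identical and nonzero, i.e. x_1 = x_2 = … = x_n = x with x ≠ 0 (so that R2/R1 = n−1), and n ≥ 2, 1 ≤ k < d, then the identity scaling function T(m) = m (the Rand-k-Spatial(Max) estimator) minimizes the mean squared error within the Rand-k-Spatial family: for every T : {1,…,n} → (0,∞), E[||x̂^{T(m)=m} − x̄||²] ≤ E[||x̂^{T} − x̄||²]. -/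
/-!
For identical data `xᵢ = x`, coordinate `j` of the estimate is `g_T(M_j) · x_j` with
`g_T(m) = β̄ m / (n T(m))` (`spatialGain`) for `m ≥ 1`, and `0` when `M_j = 0`; here
`M_j ~ Bin(n, p)`. Hence the MSE is `‖x‖² · E[(g_T(M) - 1)²]`. The normalisation `β̄` is exactly
what makes `E[g_T(M); M ≥ 1] = 1` for every `T`, so by Cauchy–Schwarz the second moment of
`g_T(M)` on `{M ≥ 1}` is minimal when `g_T` is constant there, which is the case `T(m) = m`.
-/

open Finset

noncomputable section

def binomWeight (n : ℕ) (p : ℝ) (m : ℕ) : ℝ := n.choose m * p ^ m * (1 - p) ^ (n - m)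

section Counting

variable {α : Type*} [Fintype α] (P : α → Prop) [DecidablePred P]

theorem card_filter_fun_filter_eq (n : ℕ) (A : Finset (Fin n)) :
    #{ω : Fin n → α | ({i | P (ω i)} : Finset (Fin n)) = A}
      = #{a | P a} ^ #A * #{a | ¬P a} ^ (n - #A) := by
  classical
  have hfiber : ({ω : Fin n → α | ({i | P (ω i)} : Finset (Fin n)) = A} : Finset _)
      = Fintype.piFinset fun i =>
          if i ∈ A then ({a | P a} : Finset α) else ({a | ¬P a} : Finset α) := by
    ext ω
    simp only [mem_filter, mem_univ, true_and, Fintype.mem_piFinset, Finset.ext_iff]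
    refine forall_congr' fun i => ?_
    by_cases hi : i ∈ A <;> simp [hi]
  rw [hfiber, Fintype.card_piFinset]
  simp only [apply_ite card, prod_ite, prod_const, filter_mem_eq_inter, univ_inter]
  rw [show ({i | i ∉ A} : Finset (Fin n)) = Aᶜ by ext; simp, card_compl, Fintype.card_fin]

theorem sum_apply_card_filter (n : ℕ) (F : ℕ → ℝ) :
    ∑ ω : Fin n → α, F #{i | P (ω i)}
      = ∑ m ∈ range (n + 1), n.choose m * #{a | P a} ^ m * #{a | ¬P a} ^ (n - m) * F m := by
  classical
  rw [← sum_fiberwise_of_maps_to (t := (univ : Finset (Fin n)).powerset)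
    (g := fun ω : Fin n → α => ({i | P (ω i)} : Finset (Fin n)))
    (fun ω _ => mem_powerset.2 (subset_univ _))]
  have hfiber (A : Finset (Fin n)) :
      ∑ ω : Fin n → α with ({i | P (ω i)} : Finset (Fin n)) = A, F #{i | P (ω i)}
        = (#{a | P a} ^ #A * #{a | ¬P a} ^ (n - #A) : ℕ) * F #A := by
    rw [sum_congr rfl fun ω hω => by rw [(mem_filter.1 hω).2], sum_const,
      card_filter_fun_filter_eq, nsmul_eq_mul]
  rw [sum_congr rfl fun A _ => hfiber A,
    sum_powerset_apply_card fun m => ((#{a | P a} ^ m * #{a | ¬P a} ^ (n - m) : ℕ) : ℝ) * F m]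
  simp only [card_univ, Fintype.card_fin, nsmul_eq_mul]
  refine sum_congr rfl fun m _ => ?_
  push_cast
  ring

theorem sum_apply_card_filter_div_card_pow [Nonempty α] (n : ℕ) (F : ℕ → ℝ) :
    (∑ ω : Fin n → α, F #{i | P (ω i)}) / Fintype.card α ^ n
      = ∑ m ∈ range (n + 1), binomWeight n (#{a | P a} / Fintype.card α) m * F m := by
  have hcard : (Fintype.card α : ℝ) ≠ 0 := by positivity
  have hcompl : (#{a | ¬P a} : ℝ) = Fintype.card α - #{a | P a} := by
    rw [eq_sub_iff_add_eq, ← Nat.cast_add, add_comm, card_filter_add_card_filter_not, card_univ]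
  rw [sum_apply_card_filter, sum_div]
  refine sum_congr rfl fun m hm => ?_
  have hpow : (Fintype.card α : ℝ) ^ n = Fintype.card α ^ m * Fintype.card α ^ (n - m) := by
    rw [← pow_add, Nat.add_sub_cancel' (Nat.lt_succ_iff.1 (mem_range.1 hm))]
  rw [binomWeight, hcompl, hpow, one_sub_div hcard, div_pow, div_pow]
  field_simp

end Counting

theorem card_filter_notMem_KSub {d : ℕ} (k : ℕ) (j : Fin d) :
    #{S : KSub d k | j ∉ S.1} = (d - 1).choose k := by
  have hval : (({S : KSub d k | j ∉ S.1} : Finset _).map (Function.Embedding.subtype _))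
      = powersetCard k (univ.erase j) := by
    ext s
    simp [mem_powersetCard, subset_erase, and_comm]
  rw [← card_map, hval, card_powersetCard, card_erase_of_mem (mem_univ j), card_univ,
    Fintype.card_fin]

theorem card_filter_mem_KSub_div {d k : ℕ} (hkd : k ≤ d) (j : Fin d) :
    (#{S : KSub d k | j ∈ S.1} : ℝ) / Fintype.card (KSub d k) = pr d k := by
  obtain ⟨d, rfl⟩ : ∃ d', d = d' + 1 := Nat.exists_eq_succ_of_ne_zero j.pos.ne'
  have hN : (d + 1).choose k ≠ 0 := (Nat.choose_pos hkd).ne'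
  have hcount : (#{S : KSub (d + 1) k | j ∈ S.1} : ℝ) = (d + 1).choose k - d.choose k := by
    rw [eq_sub_iff_add_eq]
    have := card_filter_add_card_filter_not (s := (univ : Finset (KSub (d + 1) k))) (j ∈ ·.1)
    rw [card_filter_notMem_KSub, card_univ, Fintype.card_finset_len, Fintype.card_fin] at this
    exact_mod_cast this
  have hrec : (d.choose k : ℝ) * (d + 1) = (d + 1).choose k * (d + 1 - k) := by
    exact_mod_cast Nat.choose_mul_succ_eq d k
  rw [Fintype.card_finset_len, Fintype.card_fin, pr,
    div_eq_div_iff (by exact_mod_cast hN) (by positivity), hcount]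
  push_cast
  linear_combination -hrec

theorem exp_apply_Mcount {n d k : ℕ} (hkd : k ≤ d) (j : Fin d) (F : ℕ → ℝ) :
    Exp (fun ω : Omega n d k => F (Mcount ω j))
      = ∑ m ∈ range (n + 1), binomWeight n (pr d k) m * F m := by
  have : Nonempty (KSub d k) :=
    Fintype.card_pos_iff.1 (by simpa using Nat.choose_pos hkd)
  rw [Exp, Fintype.card_fun, Fintype.card_fin, Nat.cast_pow, ← card_filter_mem_KSub_div hkd j]
  unfold Mcount
  exact sum_apply_card_filter_div_card_pow (fun S : KSub d k => j ∈ S.1) n F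

theorem exp_sum_mul {n d k : ℕ} {ι : Type*} [Fintype ι] (c : ι → ℝ)
    (f : ι → Omega n d k → ℝ) :
    Exp (fun ω => ∑ j, c j * f j ω) = ∑ j, c j * Exp (f j) := by
  simp only [Exp, mul_sum, sum_div, mul_div_assoc]
  exact sum_comm

def spatialGain (n d k : ℕ) (T : ℕ → ℝ) (m : ℕ) : ℝ :=
  1 / n * (betaBar n d k T / T m) * m

section IdenticalData

variable {n d k : ℕ} (x : Fin d → ℝ) (T : ℕ → ℝ)

theorem sum_spars_const (ω : Omega n d k) (j : Fin d) :
    ∑ i, spars (fun _ => x) ω i j = Mcount ω j * x j := by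
  rw [Mcount, ← nsmul_eq_mul, ← sum_const, sum_filter]
  rfl

theorem spatialEst_const_sub_sq (hn : n ≠ 0) (ω : Omega n d k) (j : Fin d) :
    (spatialEst (fun _ => x) T ω j - 1 / n * ∑ _i : Fin n, x j) ^ 2
      = x j ^ 2 * if 1 ≤ Mcount ω j then (spatialGain n d k T (Mcount ω j) - 1) ^ 2 else 1 := by
  have hmean : 1 / (n : ℝ) * ∑ _i : Fin n, x j = x j := by
    rw [sum_const, card_univ, Fintype.card_fin, nsmul_eq_mul]
    field_simp
  rw [spatialEst, hmean, sum_spars_const, spatialGain]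
  split_ifs <;> ring

theorem mseSpatial_const (hn : n ≠ 0) (hkd : k ≤ d) :
    mseSpatial n d k (fun _ => x) T = (∑ j, x j ^ 2) * (binomWeight n (pr d k) 0
      + ∑ m ∈ Icc 1 n, binomWeight n (pr d k) m * (spatialGain n d k T m - 1) ^ 2) := by
  rw [mseSpatial]
  conv_lhs => arg 1; ext ω; arg 2; ext j; rw [spatialEst_const_sub_sq x T hn]
  rw [exp_sum_mul, sum_mul]
  refine sum_congr rfl fun j _ => congrArg (x j ^ 2 * ·) ?_
  rw [exp_apply_Mcount hkd j fun m => if 1 ≤ m then (spatialGain n d k T m - 1) ^ 2 else 1,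
    sum_range_eq_add_Ico _ (by positivity), if_neg (by norm_num), mul_one,
    Ico_add_one_right_eq_Icc]
  exact congrArg _ <| sum_congr rfl fun m hm => by rw [if_pos (mem_Icc.1 hm).1]

end IdenticalData

theorem binomWeight_nonneg {p : ℝ} (hp0 : 0 ≤ p) (hp1 : p ≤ 1) (n m : ℕ) :
    0 ≤ binomWeight n p m := by
  unfold binomWeight
  have : 0 ≤ 1 - p := sub_nonneg.2 hp1
  positivity

theorem binomWeight_mul_natCast (n : ℕ) (p : ℝ) {m : ℕ} (hm : m ≠ 0) :
    binomWeight n p m * m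
      = n * p * ((n - 1).choose (m - 1) * p ^ (m - 1) * (1 - p) ^ (n - m)) := by
  obtain ⟨m, rfl⟩ := Nat.exists_eq_succ_of_ne_zero hm
  rcases n with _ | n
  · simp [binomWeight]
  have hchoose : ((n + 1).choose (m + 1) : ℝ) * (m + 1) = (n + 1) * n.choose m := by
    exact_mod_cast (Nat.add_one_mul_choose_eq n m).symm
  simp only [binomWeight, Nat.succ_sub_succ, pow_succ]
  push_cast
  linear_combination p ^ m * p * (1 - p) ^ (n - m) * hchoose

theorem pr_mem_Ioo {d k : ℕ} (hk : 0 < k) (hkd : k < d) : pr d k ∈ Set.Ioo 0 1 := by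
  have hd : (0 : ℝ) < d := by exact_mod_cast hk.trans hkd
  exact ⟨by unfold pr; positivity, (div_lt_one hd).2 (by exact_mod_cast hkd)⟩

section Normalization

variable {n d k : ℕ} {T : ℕ → ℝ}

theorem betaBar_pos (hn : n ≠ 0) (hp : pr d k ∈ Set.Ioo 0 1) (hT : ∀ m ∈ Icc 1 n, 0 < T m) :
    0 < betaBar n d k T := by
  obtain ⟨hp0, hp1⟩ := hp
  have h1p : 0 < 1 - pr d k := sub_pos.2 hp1
  have h1 : 1 ∈ Icc 1 n := mem_Icc.2 ⟨le_rfl, Nat.one_le_iff_ne_zero.2 hn⟩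
  refine inv_pos.2 (sum_pos' (fun m hm => ?_) ⟨1, h1, ?_⟩)
  · have := hT m hm
    positivity
  · have := hT 1 h1
    simp only [Nat.sub_self, Nat.choose_zero_right, pow_zero]
    positivity

theorem sum_binomWeight_mul_spatialGain (hn : n ≠ 0) (hp : pr d k ∈ Set.Ioo 0 1)
    (hT : ∀ m ∈ Icc 1 n, 0 < T m) :
    ∑ m ∈ Icc 1 n, binomWeight n (pr d k) m * spatialGain n d k T m = 1 := by
  have hterm : ∀ m ∈ Icc 1 n, binomWeight n (pr d k) m * spatialGain n d k T m
      = betaBar n d k T * (pr d k / T m * (n - 1).choose (m - 1) * pr d k ^ (m - 1)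
          * (1 - pr d k) ^ (n - m)) := fun m hm => by
    have hm0 : m ≠ 0 := Nat.one_le_iff_ne_zero.1 (mem_Icc.1 hm).1
    have hTm := (hT m hm).ne'
    have := binomWeight_mul_natCast n (pr d k) hm0
    rw [spatialGain]
    field_simp
    linear_combination betaBar n d k T * this
  rw [sum_congr rfl hterm, ← mul_sum]
  calc _ = betaBar n d k T * (betaBar n d k T)⁻¹ := by rw [betaBar, inv_inv]
    _ = 1 := mul_inv_cancel₀ (betaBar_pos hn hp hT).ne'

end Normalization

theorem sum_mul_sub_sq_le_of_eq_const {ι : Type*} (s : Finset ι) {w g h : ι → ℝ} (c a : ℝ)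
    (hw : ∀ i ∈ s, 0 ≤ w i) (hg : ∀ i ∈ s, g i = c)
    (hgh : ∑ i ∈ s, w i * g i = ∑ i ∈ s, w i * h i) :
    ∑ i ∈ s, w i * (g i - a) ^ 2 ≤ ∑ i ∈ s, w i * (h i - a) ^ 2 := by
  have hexpand (f : ι → ℝ) : ∑ i ∈ s, w i * (f i - a) ^ 2
      = ∑ i ∈ s, w i * f i ^ 2 - 2 * a * ∑ i ∈ s, w i * f i + a ^ 2 * ∑ i ∈ s, w i := by
    simp only [mul_sum, ← sum_sub_distrib, ← sum_add_distrib]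
    exact sum_congr rfl fun i _ => by ring
  have hcs : (∑ i ∈ s, w i * h i) ^ 2 ≤ (∑ i ∈ s, w i) * ∑ i ∈ s, w i * h i ^ 2 :=
    sum_sq_le_sum_mul_sum_of_sq_le_mul s hw (fun i hi => mul_nonneg (hw i hi) (sq_nonneg _))
      fun i _ => le_of_eq (by ring)
  have hg1 : ∑ i ∈ s, w i * g i = c * ∑ i ∈ s, w i := by
    rw [mul_sum]; exact sum_congr rfl fun i hi => by rw [hg i hi, mul_comm]
  have hg2 : ∑ i ∈ s, w i * g i ^ 2 = c ^ 2 * ∑ i ∈ s, w i := by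
    rw [mul_sum]; exact sum_congr rfl fun i hi => by rw [hg i hi, mul_comm]
  have hW : 0 ≤ ∑ i ∈ s, w i := sum_nonneg hw
  have hQ : 0 ≤ ∑ i ∈ s, w i * h i ^ 2 :=
    sum_nonneg fun i hi => mul_nonneg (hw i hi) (sq_nonneg _)
  rw [hexpand, hexpand, hgh, hg2]
  rw [← hgh, hg1] at hcs
  rcases hW.eq_or_lt with hW0 | hWpos
  · rw [← hW0]; linarith
  · have : c ^ 2 * ∑ i ∈ s, w i ≤ ∑ i ∈ s, w i * h i ^ 2 := by nlinarith
    linarith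

theorem spatial_max_optimal_identical_general (n d k : ℕ) (hn : 2 ≤ n) (hk : 1 ≤ k)
    (hkd : k < d) (x : Fin d → ℝ) :
    ∀ T : ℕ → ℝ, (∀ m ∈ Finset.Icc 1 n, 0 < T m) →
      mseSpatial n d k (fun _ => x) (fun m => (m : ℝ))
        ≤ mseSpatial n d k (fun _ => x) T := by
  intro T hT
  have hn0 : n ≠ 0 := by omega
  have hp := pr_mem_Ioo hk hkd
  have hid : ∀ m ∈ Icc 1 n, (0 : ℝ) < m := fun m hm => by exact_mod_cast (mem_Icc.1 hm).1
  have hconst : ∀ m ∈ Icc 1 n,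
      spatialGain n d k (fun m => (m : ℝ)) m = betaBar n d k (fun m => (m : ℝ)) / n := by
    intro m hm
    have := (hid m hm).ne'
    simp only [spatialGain]
    field_simp
  rw [mseSpatial_const x _ hn0 hkd.le, mseSpatial_const x T hn0 hkd.le]
  refine mul_le_mul_of_nonneg_left (add_le_add_right ?_ _) (sum_nonneg fun j _ => sq_nonneg (x j))
  refine sum_mul_sub_sq_le_of_eq_const _ _ 1
    (fun m _ => binomWeight_nonneg hp.1.le hp.2.le n m) hconst ?_
  rw [sum_binomWeight_mul_spatialGain hn0 hp hid, sum_binomWeight_mul_spatialGain hn0 hp hT]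

/-- Rand-k-Spatial(Max) is optimal for identical data:
if all data vectors are identical and nonzero (`xᵢ = x ≠ 0` for all `i`, so
`R₂/R₁ = n − 1`), `n ≥ 2` and `1 ≤ k < d`, then the scaling function
`T(m) = m` minimizes the MSE within the Rand-k-Spatial family. -/
theorem spatial_max_optimal_identical (n d k : ℕ) (hn : 2 ≤ n) (hk : 1 ≤ k)
    (hkd : k < d) (x : Fin d → ℝ) (hx : x ≠ 0) :
    ∀ T : ℕ → ℝ, (∀ m ∈ Finset.Icc 1 n, 0 < T m) →
      mseSpatial n d k (fun _ => x) (fun m => (m : ℝ))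
        ≤ mseSpatial n d k (fun _ => x) T :=
  spatial_max_optimal_identical_general n d k hn hk hkd x
end
end
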